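/- arXiv:1506.00507 — 6 statements merged into one kernel-verified Lean document; each statement's English description precedes it below -/
import Mathlib

section
/- Let μ be a Radon measure over ℝⁿ, T an m-dimensional linear subspace of ℝⁿ, and a ∈ ℝⁿ. Suppose lim_{r↓0} r^{-m} ∫_{B̄(a,r)} |P_{T^⊥}(b−a)|/|b−a| dμ(b) = 0, where P_{T^⊥} is the orthogonal projection onto the orthogonal complement of T. Then the approximate m-dimensional tangent cone of μ at a is contained in T. -/
open MeasureTheory Metric Filter Topology
open scoped ENNReal

noncomputable section

/-- The cone `E(a,v,ε)` of directions approximating `v` from `a`. -/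
def coneE {n : ℕ} (a v : EuclideanSpace ℝ (Fin n)) (ε : ℝ) : Set (EuclideanSpace ℝ (Fin n)) :=
  {b | ∃ t : ℝ, 0 < t ∧ ‖t • (b - a) - v‖ < ε}

/-- Upper `m`-density of a measure at a point. -/
def upperDensity (m : ℕ) {n : ℕ} (μ : Measure (EuclideanSpace ℝ (Fin n)))
    (a : EuclideanSpace ℝ (Fin n)) : ℝ≥0∞ :=
  Filter.limsup (fun r : ℝ =>
    μ (closedBall a r) /
      (volume (ball (0 : EuclideanSpace ℝ (Fin m)) 1) * ENNReal.ofReal (r ^ m)))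
    (𝓝[>] (0 : ℝ))

/-- The approximate `m`-dimensional tangent cone of `μ` at `a` (Federer 3.2.16). -/
def apTan (m : ℕ) {n : ℕ} (μ : Measure (EuclideanSpace ℝ (Fin n)))
    (a : EuclideanSpace ℝ (Fin n)) : Set (EuclideanSpace ℝ (Fin n)) :=
  {v | ∀ ε : ℝ, 0 < ε → 0 < upperDensity m (μ.restrict (coneE a v ε)) a}

theorem coneE_isOpen {n : ℕ} (a v : EuclideanSpace ℝ (Fin n)) (ε : ℝ) : IsOpen (coneE a v ε) := by
  have : coneE a v ε = ⋃ t ∈ Set.Ioi (0:ℝ), {b | ‖t • (b - a) - v‖ < ε} := by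
    ext b; simp [coneE, Set.mem_setOf_eq]
  rw [this]
  exact isOpen_biUnion fun t ht =>
    isOpen_lt (Continuous.norm (by fun_prop)) continuous_const

theorem stmt0 {n m : ℕ} (hm : 1 ≤ m) (hmn : m < n)
    (μ : Measure (EuclideanSpace ℝ (Fin n))) [IsLocallyFiniteMeasure μ]
    (T : Submodule ℝ (EuclideanSpace ℝ (Fin n))) (hT : Module.finrank ℝ T = m)
    (a : EuclideanSpace ℝ (Fin n))
    (h : Tendsto (fun r : ℝ =>
        (r ^ m)⁻¹ * ∫ b in closedBall a r,
          ‖(Tᗮ.orthogonalProjection (b - a) : EuclideanSpace ℝ (Fin n))‖ / ‖b - a‖ ∂μ)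
      (𝓝[>] (0 : ℝ)) (𝓝 0)) :
    apTan m μ a ⊆ (T : Set (EuclideanSpace ℝ (Fin n))) := by
  intro v hv
  by_contra hvT
  have hPnorm : ∀ x : EuclideanSpace ℝ (Fin n),
      ‖(Tᗮ.orthogonalProjection x : EuclideanSpace ℝ (Fin n))‖ ≤ ‖x‖ := by
    intro x
    have := Tᗮ.orthogonalProjection.le_of_opNorm_le (Submodule.orthogonalProjectionOnto_norm_le _) x
    simpa using this
  have hPvne : Tᗮ.orthogonalProjection v ≠ 0 := by
    intro h0
    exact hvT (Submodule.orthogonal_orthogonal T ▸ Submodule.orthogonalProjectionOnto_eq_zero_iff.mp h0)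
  have hPv : (0:ℝ) < ‖(Tᗮ.orthogonalProjection v : EuclideanSpace ℝ (Fin n))‖ := by
    have he : ‖(Tᗮ.orthogonalProjection v : EuclideanSpace ℝ (Fin n))‖
        = ‖Tᗮ.orthogonalProjection v‖ := rfl
    rw [he, norm_pos_iff]
    exact hPvne
  set δ : ℝ := ‖(Tᗮ.orthogonalProjection v : EuclideanSpace ℝ (Fin n))‖ with hδdef
  have hδv : δ ≤ ‖v‖ := hPnorm v
  set ε : ℝ := δ / 2 with hεdef
  have hεpos : 0 < ε := by positivity
  set c : ℝ := (δ / 2) / (‖v‖ + δ / 2) with hcdef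
  have hden : 0 < ‖v‖ + δ / 2 := by have := norm_nonneg v; linarith
  have hcpos : 0 < c := div_pos (by linarith) hden
  set S := coneE a v ε with hSdef
  have hSmeas : MeasurableSet S := (coneE_isOpen a v ε).measurableSet
  set f : EuclideanSpace ℝ (Fin n) → ℝ := fun b =>
    ‖(Tᗮ.orthogonalProjection (b - a) : EuclideanSpace ℝ (Fin n))‖ / ‖b - a‖ with hfdef
  have hf0 : ∀ b, 0 ≤ f b := fun b => div_nonneg (norm_nonneg _) (norm_nonneg _)
  have hf1 : ∀ b, f b ≤ 1 := fun b => div_le_one_of_le₀ (hPnorm _) (norm_nonneg _)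
  have hfc : Measurable f := by
    apply Measurable.div
    · exact (Continuous.norm (continuous_subtype_val.comp
        (Tᗮ.orthogonalProjection.continuous.comp
          (continuous_id.sub continuous_const)))).measurable
    · exact (Continuous.norm (continuous_id.sub continuous_const)).measurable
  -- pointwise bound on the cone
  have key : ∀ b ∈ S, c ≤ f b := by
    rintro b ⟨t, ht, htb⟩
    have hsub : Tᗮ.orthogonalProjection (t • (b - a) - v)
        = Tᗮ.orthogonalProjection (t • (b - a)) - Tᗮ.orthogonalProjection v := map_sub _ _ _
    have hle : ‖(Tᗮ.orthogonalProjection (t • (b - a)) : EuclideanSpace ℝ (Fin n))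
        - (Tᗮ.orthogonalProjection v : EuclideanSpace ℝ (Fin n))‖ ≤ ε := by
      have := hPnorm (t • (b - a) - v)
      rw [hsub] at this
      calc _ ≤ ‖t • (b - a) - v‖ := by simpa using this
        _ ≤ ε := htb.le
    have h1 : δ - ε ≤ ‖(Tᗮ.orthogonalProjection (t • (b - a)) : EuclideanSpace ℝ (Fin n))‖ := by
      have habs := abs_norm_sub_norm_le
        (Tᗮ.orthogonalProjection (t • (b - a)) : EuclideanSpace ℝ (Fin n))
        (Tᗮ.orthogonalProjection v : EuclideanSpace ℝ (Fin n))
      have h' := (abs_le.mp (habs.trans hle)).1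
      rw [← hδdef] at h'
      linarith
    have h2 : t * ‖b - a‖ ≤ ‖v‖ + ε := by
      have heq : ‖t • (b - a)‖ = ‖(t • (b - a) - v) + v‖ := by rw [sub_add_cancel]
      have : ‖t • (b - a)‖ ≤ ε + ‖v‖ := by
        rw [heq]
        calc ‖(t • (b - a) - v) + v‖ ≤ ‖t • (b - a) - v‖ + ‖v‖ := norm_add_le _ _
          _ ≤ ε + ‖v‖ := by linarith [htb.le]
      rw [norm_smul, Real.norm_eq_abs, abs_of_pos ht] at this
      linarith
    have hba : 0 < ‖b - a‖ := by
      rcases eq_or_ne b a with rfl | hne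
      · exfalso
        simp only [sub_self, smul_zero, zero_sub, norm_neg] at htb
        rw [hεdef] at htb
        linarith
      · simpa [sub_eq_zero] using hne
    have h3 : ‖(Tᗮ.orthogonalProjection (t • (b - a)) : EuclideanSpace ℝ (Fin n))‖
        = t * ‖(Tᗮ.orthogonalProjection (b - a) : EuclideanSpace ℝ (Fin n))‖ := by
      have hms : Tᗮ.orthogonalProjection (t • (b - a)) = t • Tᗮ.orthogonalProjection (b - a) :=
        _root_.map_smul _ t _
      rw [hms, Submodule.coe_smul, norm_smul, Real.norm_eq_abs, abs_of_pos ht]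
    rw [h3] at h1
    show c ≤ _
    rw [hfdef]
    simp only
    rw [le_div_iff₀ hba, hcdef, div_mul_eq_mul_div, div_le_iff₀ hden]
    set P : ℝ := ‖(Tᗮ.orthogonalProjection (b - a) : EuclideanSpace ℝ (Fin n))‖ with hPdef
    have hP0 : (0:ℝ) ≤ t * P := le_trans (by rw [hεdef]; linarith) h1
    have hmul : (δ/2) * (t * ‖b - a‖) ≤ (t * P) * (‖v‖ + δ/2) := by
      apply mul_le_mul _ _ (mul_nonneg ht.le (norm_nonneg _)) hP0
      · rw [hεdef] at h1; linarith
      · rw [hεdef] at h2; exact h2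
    have hmul' : t * (δ/2 * ‖b - a‖) ≤ t * (P * (‖v‖ + δ/2)) := by
      have e1 : t * (δ/2 * ‖b - a‖) = δ/2 * (t * ‖b - a‖) := by ring
      have e2 : t * (P * (‖v‖ + δ/2)) = (t * P) * (‖v‖ + δ/2) := by ring
      rw [e1, e2]; exact hmul
    exact le_of_mul_le_mul_left hmul' ht
  -- the normalizing constant
  set ω : ℝ≥0∞ := volume (ball (0 : EuclideanSpace ℝ (Fin m)) 1) with hωdef
  have hω0 : ω ≠ 0 := (measure_ball_pos volume (0 : EuclideanSpace ℝ (Fin m)) one_pos).ne'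
  have hωtop : ω ≠ ∞ := measure_ball_lt_top.ne
  -- measure estimate for every r > 0
  have hmain : ∀ r ∈ Set.Ioi (0:ℝ),
      (μ.restrict S) (closedBall a r) / (ω * ENNReal.ofReal (r ^ m)) ≤
        ENNReal.ofReal (c⁻¹ * ((r ^ m)⁻¹ * ∫ b in closedBall a r, f b ∂μ)) * ω⁻¹ := by
    intro r hr
    rw [Set.mem_Ioi] at hr
    have hrm : (0:ℝ) < r ^ m := pow_pos hr m
    have hBfin : μ (closedBall a r) ≠ ∞ := ((isCompact_closedBall a r).measure_lt_top).ne
    have hint : IntegrableOn f (closedBall a r) μ := by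
      apply Measure.integrableOn_of_bounded hBfin hfc.aestronglyMeasurable
      filter_upwards with x
      rw [Real.norm_eq_abs, abs_of_nonneg (hf0 x)]
      exact hf1 x
    have hSB : μ (S ∩ closedBall a r) ≠ ∞ :=
      ne_top_of_le_ne_top hBfin (measure_mono Set.inter_subset_right)
    have hstep : c * (μ (S ∩ closedBall a r)).toReal ≤ ∫ b in closedBall a r, f b ∂μ := by
      refine le_trans (setIntegral_ge_of_const_le_real (hSmeas.inter measurableSet_closedBall) hSB
        (fun x hx => key x hx.1) (hint.mono_set Set.inter_subset_right)) ?_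
      exact setIntegral_mono_set hint (Eventually.of_forall hf0)
        (HasSubset.Subset.eventuallyLE Set.inter_subset_right)
    have h4 : μ (S ∩ closedBall a r) ≤
        ENNReal.ofReal (c⁻¹ * ∫ b in closedBall a r, f b ∂μ) := by
      rw [← ENNReal.ofReal_toReal hSB]
      apply ENNReal.ofReal_le_ofReal
      rw [le_inv_mul_iff₀ hcpos]
      exact hstep
    have hrestr : (μ.restrict S) (closedBall a r) = μ (S ∩ closedBall a r) := by
      rw [Measure.restrict_apply' hSmeas, Set.inter_comm]
    rw [hrestr]
    calc μ (S ∩ closedBall a r) / (ω * ENNReal.ofReal (r ^ m))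
        ≤ ENNReal.ofReal (c⁻¹ * ∫ b in closedBall a r, f b ∂μ) / (ω * ENNReal.ofReal (r ^ m)) :=
          ENNReal.div_le_div_right h4 _
      _ = ENNReal.ofReal (c⁻¹ * ∫ b in closedBall a r, f b ∂μ) / ENNReal.ofReal (r ^ m) * ω⁻¹ := by
          rw [div_eq_mul_inv, ENNReal.mul_inv (Or.inl hω0) (Or.inl hωtop),
            div_eq_mul_inv, mul_comm ω⁻¹ (ENNReal.ofReal (r ^ m))⁻¹, ← mul_assoc]
      _ = ENNReal.ofReal (c⁻¹ * (∫ b in closedBall a r, f b ∂μ) / r ^ m) * ω⁻¹ := by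
          rw [ENNReal.ofReal_div_of_pos hrm]
      _ = ENNReal.ofReal (c⁻¹ * ((r ^ m)⁻¹ * ∫ b in closedBall a r, f b ∂μ)) * ω⁻¹ := by
          congr 1
          rw [div_eq_mul_inv, mul_assoc, mul_comm (∫ b in closedBall a r, f b ∂μ) (r ^ m)⁻¹]
  -- the bound tends to zero
  have hbound : Tendsto (fun r : ℝ =>
      ENNReal.ofReal (c⁻¹ * ((r ^ m)⁻¹ * ∫ b in closedBall a r, f b ∂μ)) * ω⁻¹)
      (𝓝[>] (0:ℝ)) (𝓝 0) := by
    have h5 : Tendsto (fun r : ℝ => c⁻¹ * ((r ^ m)⁻¹ * ∫ b in closedBall a r, f b ∂μ))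
        (𝓝[>] (0:ℝ)) (𝓝 0) := by
      have := h.const_mul c⁻¹
      simpa using this
    have h6 := ENNReal.tendsto_ofReal h5
    rw [ENNReal.ofReal_zero] at h6
    have h7 := ENNReal.Tendsto.mul_const h6 (Or.inr (ENNReal.inv_ne_top.mpr hω0))
    simpa using h7
  have hzero : upperDensity m (μ.restrict S) a = 0 := by
    apply le_antisymm _ zero_le
    unfold upperDensity
    rw [← hωdef]
    refine le_trans (limsup_le_limsup (eventually_of_mem self_mem_nhdsWithin hmain)) ?_
    rw [hbound.limsup_eq]
  have := hv ε hεpos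
  rw [← hSdef, hzero] at this
  exact lt_irrefl _ this
end
end

section
/- Let μ be a measure over ℝⁿ, T an m-dimensional linear subspace of ℝⁿ, and a ∈ ℝⁿ. If lim_{r↓0} r^{-m-1} ∫_{B̄(a,r)} |P_{T^⊥}(b−a)| dμ(b) = 0, then lim_{r↓0} r^{-m} ∫_{B̄(a,r)} |P_{T^⊥}(b−a)|/|b−a| dμ(b) = 0. -/
open MeasureTheory Metric Filter Topology
open scoped ENNReal

theorem stmt1 {n m : ℕ} (hm : 1 ≤ m) (hmn : m < n)
    (μ : Measure (EuclideanSpace ℝ (Fin n)))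
    (T : Submodule ℝ (EuclideanSpace ℝ (Fin n))) (hT : Module.finrank ℝ T = m)
    (a : EuclideanSpace ℝ (Fin n))
    (h : Filter.Tendsto (fun r : ℝ =>
        (r ^ (m + 1))⁻¹ * ∫ b in closedBall a r,
          ‖(Submodule.orthogonalProjectionOnto Tᗮ (b - a) : EuclideanSpace ℝ (Fin n))‖ ∂μ)
      (𝓝[>] (0 : ℝ)) (𝓝 0)) :
    Filter.Tendsto (fun r : ℝ =>
        (r ^ m)⁻¹ * ∫ b in closedBall a r,
          ‖(Submodule.orthogonalProjectionOnto Tᗮ (b - a) : EuclideanSpace ℝ (Fin n))‖ / ‖b - a‖ ∂μ)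
      (𝓝[>] (0 : ℝ)) (𝓝 0) := by
  set g : EuclideanSpace ℝ (Fin n) → ℝ := fun b => ‖(Submodule.orthogonalProjectionOnto Tᗮ (b - a) : EuclideanSpace ℝ (Fin n))‖ with hgdef
  set f : EuclideanSpace ℝ (Fin n) → ℝ := fun b => g b / ‖b - a‖ with hfdef
  have hg0 : ∀ b, 0 ≤ g b := fun b => norm_nonneg _
  have hf0 : ∀ b, 0 ≤ f b := fun b => div_nonneg (hg0 b) (norm_nonneg _)
  have hgcont : Continuous g := by
    apply Continuous.norm
    exact continuous_subtype_val.comp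
      ((Submodule.orthogonalProjectionOnto Tᗮ).continuous.comp (continuous_id.sub continuous_const))
  have hfmeas : Measurable f :=
    (hgcont.measurable).div ((continuous_id.sub continuous_const).norm.measurable)
  have hga : g a = 0 := by simp [hgdef]
  have hgf : ∀ b, g b = f b * ‖b - a‖ := by
    intro b
    by_cases hb : b = a
    · simp [hb, hga]
    · have : ‖b - a‖ ≠ 0 := by
        simpa [sub_eq_zero] using hb
      exact (div_mul_cancel₀ _ this).symm
  rw [Metric.tendsto_nhdsWithin_nhds] at h ⊢
  intro ε hε
  obtain ⟨δ, hδ, hh⟩ := h (ε / 8) (by positivity)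
  refine ⟨δ, hδ, ?_⟩
  intro r hr hrδ
  have hr0 : (0 : ℝ) < r := hr
  have hrδ' : r < δ := by rwa [Real.dist_eq, sub_zero, abs_of_pos hr0] at hrδ
  -- the key estimate from the hypothesis
  have key : ∀ s : ℝ, 0 < s → s < δ →
      (∫ b in closedBall a s, g b ∂μ) ≤ ε / 8 * s ^ (m + 1) := by
    intro s hs hsδ
    have h1 := hh (x := s) hs (by rwa [Real.dist_eq, sub_zero, abs_of_pos hs])
    rw [Real.dist_eq, sub_zero] at h1
    have hsp : (0 : ℝ) < s ^ (m + 1) := by positivity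
    have hI : 0 ≤ ∫ b in closedBall a s, g b ∂μ :=
      integral_nonneg fun b => hg0 b
    have h2 : (s ^ (m + 1))⁻¹ * ∫ b in closedBall a s, g b ∂μ < ε / 8 := by
      calc (s ^ (m + 1))⁻¹ * ∫ b in closedBall a s, g b ∂μ
          ≤ |(s ^ (m + 1))⁻¹ * ∫ b in closedBall a s, g b ∂μ| := le_abs_self _
        _ < ε / 8 := h1
    calc (∫ b in closedBall a s, g b ∂μ)
        = s ^ (m + 1) * ((s ^ (m + 1))⁻¹ * ∫ b in closedBall a s, g b ∂μ) := by
          field_simp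
      _ ≤ s ^ (m + 1) * (ε / 8) := by
          exact mul_le_mul_of_nonneg_left h2.le hsp.le
      _ = ε / 8 * s ^ (m + 1) := by ring
  by_cases hf : IntegrableOn f (closedBall a r) μ
  · -- main case
    -- dyadic annuli
    set A : ℕ → Set (EuclideanSpace ℝ (Fin n)) := fun k => closedBall a (r / 2 ^ k) \ ball a (r / 2 ^ (k + 1)) with hA
    have hsub : closedBall a r ⊆ {a} ∪ ⋃ k, A k := by
      intro b hb
      by_cases hba : b = a
      · exact Or.inl hba
      · right
        have hd0 : 0 < dist b a := dist_pos.2 hba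
        have hdr : dist b a ≤ r := mem_closedBall.1 hb
        obtain ⟨k, hk1, hk2⟩ := exists_nat_pow_near
          (x := r / dist b a) (y := (2:ℝ)) ((one_le_div hd0).2 hdr) one_lt_two
        refine Set.mem_iUnion.2 ⟨k, ?_, ?_⟩
        · rw [mem_closedBall, le_div_iff₀ (by positivity : (0:ℝ) < 2 ^ k)]
          rw [le_div_iff₀ hd0] at hk1
          nlinarith
        · intro hmem
          rw [mem_ball] at hmem
          rw [div_lt_iff₀ hd0] at hk2
          rw [lt_div_iff₀ (by positivity : (0:ℝ) < 2 ^ (k+1))] at hmem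
          nlinarith
    -- integrability of g on the small balls
    have hgint : ∀ s : ℝ, 0 < s → s ≤ r → IntegrableOn g (closedBall a s) μ := by
      intro s hs hsr
      have hsub' : closedBall a s ⊆ closedBall a r := closedBall_subset_closedBall hsr
      have hf' : IntegrableOn f (closedBall a s) μ := hf.mono_set hsub'
      apply Integrable.mono' (hf'.const_mul r) hgcont.aestronglyMeasurable.restrict
      refine (ae_restrict_iff' measurableSet_closedBall).2 (ae_of_all _ ?_)
      intro b hb
      rw [Real.norm_eq_abs, abs_of_nonneg (hg0 b), hgf b]
      have hbn : ‖b - a‖ ≤ r := by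
        rw [← dist_eq_norm]; exact (mem_closedBall.1 hb).trans hsr
      calc f b * ‖b - a‖ ≤ f b * r := mul_le_mul_of_nonneg_left hbn (hf0 b)
        _ = r * f b := mul_comm _ _
    have hFa : ENNReal.ofReal (f a) = 0 := by
      simp [hfdef, hga]
    -- per-annulus bound
    have hannulus : ∀ k : ℕ, (∫⁻ b in A k, ENNReal.ofReal (f b) ∂μ)
        ≤ ENNReal.ofReal (ε / 4 * r ^ m * (1 / 2) ^ k) := by
      intro k
      have h2k : (0:ℝ) < 2 ^ k := by positivity
      have hrk : (0:ℝ) < r / 2 ^ k := by positivity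
      have hrk1 : (0:ℝ) < r / 2 ^ (k + 1) := by positivity
      have hsmall : r / 2 ^ k ≤ r := div_le_self hr0.le (one_le_pow₀ one_le_two)
      have hc : (0:ℝ) ≤ 2 ^ (k + 1) / r := by positivity
      have hAmeas : MeasurableSet (A k) :=
        measurableSet_closedBall.diff measurableSet_ball
      calc (∫⁻ b in A k, ENNReal.ofReal (f b) ∂μ)
          ≤ ∫⁻ b in A k, ENNReal.ofReal (2 ^ (k + 1) / r) * ENNReal.ofReal (g b) ∂μ := by
            apply setLIntegral_mono' hAmeas
            intro b hb
            rw [← ENNReal.ofReal_mul hc]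
            apply ENNReal.ofReal_le_ofReal
            have hb2 : r / 2 ^ (k + 1) ≤ ‖b - a‖ := by
              have h3 := hb.2
              rw [mem_ball, not_lt] at h3
              rwa [← dist_eq_norm]
            have : f b ≤ g b / (r / 2 ^ (k + 1)) := by
              show g b / ‖b - a‖ ≤ g b / (r / 2 ^ (k + 1))
              gcongr
            refine this.trans (le_of_eq ?_)
            field_simp
        _ = ENNReal.ofReal (2 ^ (k + 1) / r) * ∫⁻ b in A k, ENNReal.ofReal (g b) ∂μ :=
            lintegral_const_mul' _ _ ENNReal.ofReal_ne_top
        _ ≤ ENNReal.ofReal (2 ^ (k + 1) / r)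
              * ∫⁻ b in closedBall a (r / 2 ^ k), ENNReal.ofReal (g b) ∂μ :=
            mul_le_mul_right (lintegral_mono_set Set.diff_subset) _
        _ = ENNReal.ofReal (2 ^ (k + 1) / r)
              * ENNReal.ofReal (∫ b in closedBall a (r / 2 ^ k), g b ∂μ) := by
            rw [ofReal_integral_eq_lintegral_ofReal (hgint _ hrk hsmall) (ae_of_all _ hg0)]
        _ ≤ ENNReal.ofReal (2 ^ (k + 1) / r)
              * ENNReal.ofReal (ε / 8 * (r / 2 ^ k) ^ (m + 1)) := by
            gcongr
            exact key _ hrk (lt_of_le_of_lt hsmall hrδ')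
        _ = ENNReal.ofReal (2 ^ (k + 1) / r * (ε / 8 * (r / 2 ^ k) ^ (m + 1))) :=
            (ENNReal.ofReal_mul hc).symm
        _ ≤ ENNReal.ofReal (ε / 4 * r ^ m * (1 / 2) ^ k) := by
            apply ENNReal.ofReal_le_ofReal
            have heq : 2 ^ (k + 1) / r * (ε / 8 * (r / 2 ^ k) ^ (m + 1))
                = ε / 4 * r ^ m * (1 / (2 ^ k) ^ m) := by
              rw [div_pow, pow_succ, pow_succ]
              field_simp
              ring
            rw [heq, one_div_pow]
            have hple : (2:ℝ) ^ k ≤ ((2:ℝ) ^ k) ^ m :=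
              le_self_pow₀ (one_le_pow₀ one_le_two) (by omega)
            have h5 := one_div_le_one_div_of_le h2k hple
            exact mul_le_mul_of_nonneg_left h5 (by positivity)
    -- summing up
    have hhalf : ENNReal.ofReal ((1:ℝ) / 2) = 2⁻¹ := by
      rw [one_div, ENNReal.ofReal_inv_of_pos (by norm_num)]
      norm_num
    have hlin : (∫⁻ b in closedBall a r, ENNReal.ofReal (f b) ∂μ)
        ≤ ENNReal.ofReal (ε / 2 * r ^ m) := by
      calc (∫⁻ b in closedBall a r, ENNReal.ofReal (f b) ∂μ)
          ≤ ∫⁻ b in {a} ∪ ⋃ k, A k, ENNReal.ofReal (f b) ∂μ := lintegral_mono_set hsub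
        _ ≤ (∫⁻ b in ({a} : Set (EuclideanSpace ℝ (Fin n))), ENNReal.ofReal (f b) ∂μ)
              + ∫⁻ b in ⋃ k, A k, ENNReal.ofReal (f b) ∂μ := lintegral_union_le _ _ _
        _ ≤ 0 + ∑' k, ∫⁻ b in A k, ENNReal.ofReal (f b) ∂μ := by
            gcongr
            · rw [lintegral_singleton]
              simp [hFa]
            · exact lintegral_iUnion_le _ _
        _ ≤ 0 + ∑' k : ℕ, ENNReal.ofReal (ε / 4 * r ^ m * (1 / 2) ^ k) := by
            gcongr with k
            exact hannulus k
        _ = ENNReal.ofReal (ε / 4 * r ^ m) * ∑' k : ℕ, (2⁻¹ : ℝ≥0∞) ^ k := by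
            rw [zero_add, ← ENNReal.tsum_mul_left]
            apply tsum_congr
            intro k
            rw [ENNReal.ofReal_mul (by positivity), ENNReal.ofReal_pow (by norm_num), hhalf]
        _ = ENNReal.ofReal (ε / 4 * r ^ m) * 2 := by
            rw [ENNReal.tsum_geometric, ENNReal.one_sub_inv_two, inv_inv]
        _ = ENNReal.ofReal (ε / 2 * r ^ m) := by
            rw [show (2:ℝ≥0∞) = ENNReal.ofReal 2 by simp,
              ← ENNReal.ofReal_mul (by positivity)]
            congr 1
            ring
    have hint_eq : (∫ b in closedBall a r, f b ∂μ)
        = (∫⁻ b in closedBall a r, ENNReal.ofReal (f b) ∂μ).toReal :=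
      integral_eq_lintegral_of_nonneg_ae (ae_of_all _ hf0) hfmeas.aestronglyMeasurable
    have hIle : (∫ b in closedBall a r, f b ∂μ) ≤ ε / 2 * r ^ m := by
      rw [hint_eq]
      calc (∫⁻ b in closedBall a r, ENNReal.ofReal (f b) ∂μ).toReal
          ≤ (ENNReal.ofReal (ε / 2 * r ^ m)).toReal :=
            ENNReal.toReal_mono ENNReal.ofReal_ne_top hlin
        _ = ε / 2 * r ^ m := ENNReal.toReal_ofReal (by positivity)
    have hIpos : 0 ≤ ∫ b in closedBall a r, f b ∂μ := integral_nonneg hf0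
    have hrm : (0:ℝ) < r ^ m := by positivity
    rw [Real.dist_eq, sub_zero,
      abs_of_nonneg (mul_nonneg (inv_nonneg.2 hrm.le) hIpos)]
    calc (r ^ m)⁻¹ * ∫ b in closedBall a r, f b ∂μ
        ≤ (r ^ m)⁻¹ * (ε / 2 * r ^ m) :=
          mul_le_mul_of_nonneg_left hIle (by positivity)
      _ = ε / 2 := by field_simp
      _ < ε := by linarith
  · -- f is not integrable: the integral is 0
    rw [integral_undef hf]
    simpa [Real.dist_eq] using hε
end

section
/- Let T be an m-dimensional linear subspace of ℝⁿ and η : T → T^⊥ a linear map. Let S = { v + η(v) : v ∈ T }, which is an m-dimensional linear subspace of ℝⁿ. Then the operator norm of the difference of the orthogonal projections satisfies ‖P_S − P_T‖² = ‖η‖² / (1 + ‖η‖²), where ‖η‖ denotes the operator norm of η. -/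
open MeasureTheory Metric Filter Topology
open scoped ENNReal RealInnerProductSpace

noncomputable section

set_option maxHeartbeats 2000000 in
theorem stmt2 {n m : ℕ} (hm : 1 ≤ m) (hmn : m < n)
    (T : Submodule ℝ (EuclideanSpace ℝ (Fin n))) (hT : Module.finrank ℝ T = m)
    (η : T →L[ℝ] Tᗮ)
    (S : Submodule ℝ (EuclideanSpace ℝ (Fin n)))
    (hS : S = LinearMap.range (T.subtype + Tᗮ.subtype.comp (η : T →ₗ[ℝ] Tᗮ))) :
    ‖S.subtypeL.comp S.orthogonalProjectionOnto - T.subtypeL.comp T.orthogonalProjectionOnto‖ ^ 2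
      = ‖η‖ ^ 2 / (1 + ‖η‖ ^ 2) := by
  obtain ⟨D, hD⟩ : ∃ D', D' = S.subtypeL.comp (S.orthogonalProjectionOnto)
      - T.subtypeL.comp (T.orthogonalProjectionOnto) := ⟨_, rfl⟩
  rw [← hD]
  obtain ⟨σ, hσ⟩ : ∃ s, s = ‖η‖ := ⟨_, rfl⟩
  rw [← hσ]
  have hσ0 : 0 ≤ σ := by rw [hσ]; exact norm_nonneg η
  have hden : (0:ℝ) < 1 + σ ^ 2 := by positivity
  obtain ⟨c2, hc2⟩ : ∃ c, c = σ ^ 2 / (1 + σ ^ 2) := ⟨_, rfl⟩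
  rw [← hc2]
  have hc20 : 0 ≤ c2 := by rw [hc2]; positivity
  -- membership in S
  have memS : ∀ v : T, ((v : EuclideanSpace ℝ (Fin n)) + ((η v : Tᗮ) : EuclideanSpace ℝ (Fin n))) ∈ S := by
    intro v
    rw [hS]
    exact ⟨v, rfl⟩
  have memS' : ∀ w ∈ S, ∃ v : T, (v : EuclideanSpace ℝ (Fin n)) + ((η v : Tᗮ) : EuclideanSpace ℝ (Fin n)) = w := by
    intro w hw
    rw [hS] at hw
    obtain ⟨v, hv⟩ := hw
    exact ⟨v, hv⟩
  -- orthogonality of T and Tᗮ parts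
  have horth : ∀ (a : T) (b : Tᗮ), ⟪(a : EuclideanSpace ℝ (Fin n)), (b : EuclideanSpace ℝ (Fin n))⟫ = 0 := fun a b =>
    Submodule.inner_right_of_mem_orthogonal a.2 b.2
  have pyth : ∀ (a : T) (b : Tᗮ), ‖(a : EuclideanSpace ℝ (Fin n)) + (b : EuclideanSpace ℝ (Fin n))‖ ^ 2 = ‖a‖ ^ 2 + ‖b‖ ^ 2 := by
    intro a b
    rw [norm_add_sq_real, horth a b]
    simp
  -- key1 : every u in T is close to S
  have key1 : ∀ u : T, ∃ w ∈ S, ‖(u : EuclideanSpace ℝ (Fin n)) - w‖ ^ 2 ≤ c2 * ‖u‖ ^ 2 := by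
    intro u
    set u' : T := ((1 + σ ^ 2)⁻¹) • u with hu'
    refine ⟨(u' : EuclideanSpace ℝ (Fin n)) + ((η u' : Tᗮ) : EuclideanSpace ℝ (Fin n)), memS u', ?_⟩
    have h1 : (u : EuclideanSpace ℝ (Fin n)) - ((u' : EuclideanSpace ℝ (Fin n)) + ((η u' : Tᗮ) : EuclideanSpace ℝ (Fin n)))
        = ((u - u' : T) : EuclideanSpace ℝ (Fin n)) + ((-(η u') : Tᗮ) : EuclideanSpace ℝ (Fin n)) := by
      push_cast
      abel
    rw [h1, pyth]
    have h2 : u - u' = (σ ^ 2 / (1 + σ ^ 2)) • u := by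
      rw [hu', show u - (1 + σ ^ 2)⁻¹ • u = (1 - (1 + σ ^ 2)⁻¹) • u by
        rw [sub_smul, one_smul]]
      congr 1
      field_simp; ring
    have h3 : ‖u - u'‖ = σ ^ 2 / (1 + σ ^ 2) * ‖u‖ := by
      rw [h2, norm_smul, Real.norm_eq_abs, abs_of_nonneg (by positivity)]
    have h4 : ‖η u'‖ ≤ σ * ((1 + σ ^ 2)⁻¹ * ‖u‖) := by
      calc ‖η u'‖ ≤ σ * ‖u'‖ := by rw [hσ]; exact η.le_opNorm u'
        _ = σ * ((1 + σ ^ 2)⁻¹ * ‖u‖) := by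
            have hn : ‖u'‖ = (1 + σ ^ 2)⁻¹ * ‖u‖ := by
              rw [hu', norm_smul, Real.norm_eq_abs, abs_of_pos (inv_pos.mpr hden)]
            rw [hn]
    have h5 : ‖(-(η u') : Tᗮ)‖ = ‖η u'‖ := by simp
    rw [h5, h3]
    have hη0 : 0 ≤ ‖η u'‖ := norm_nonneg _
    have hu0 : 0 ≤ ‖u‖ := norm_nonneg _
    rw [hc2]
    have e1 : (σ ^ 2 / (1 + σ ^ 2) * ‖u‖) ^ 2 = σ^4 / (1+σ^2)^2 * ‖u‖^2 := by
      field_simp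
    have e2 : ‖η u'‖ ^ 2 ≤ σ^2 / (1+σ^2)^2 * ‖u‖^2 := by
      have := pow_le_pow_left₀ hη0 h4 2
      calc ‖η u'‖ ^ 2 ≤ (σ * ((1 + σ ^ 2)⁻¹ * ‖u‖))^2 := this
        _ = σ^2/(1+σ^2)^2 * ‖u‖^2 := by field_simp
    rw [e1]
    have e3 : σ^4 / (1+σ^2)^2 * ‖u‖^2 + σ^2 / (1+σ^2)^2 * ‖u‖^2
        = σ^2/(1+σ^2) * ‖u‖^2 := by
      field_simp
      ring
    linarith [e2, e3]
  -- key2 : projection of S-orthogonal vectors onto T is contractive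
  have key2 : ∀ y : EuclideanSpace ℝ (Fin n), (∀ w ∈ S, ⟪y, w⟫ = 0) →
      ‖((T.orthogonalProjectionOnto y : T) : EuclideanSpace ℝ (Fin n))‖ ^ 2 ≤ c2 * ‖y‖ ^ 2 := by
    intro y hy
    obtain ⟨u, hu⟩ : ∃ u' : T, u' = T.orthogonalProjectionOnto y := ⟨_, rfl⟩
    rw [← hu]
    by_cases hu0 : (u : EuclideanSpace ℝ (Fin n)) = 0
    · rw [hu0]; simp; positivity
    have h1 : ⟪y, (u : EuclideanSpace ℝ (Fin n))⟫ = ‖u‖ ^ 2 := by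
      have hy' : y - (u : EuclideanSpace ℝ (Fin n)) ∈ Tᗮ := by
        rw [hu]; exact T.sub_starProjection_mem_orthogonal y
      have : ⟪y - (u : EuclideanSpace ℝ (Fin n)), (u : EuclideanSpace ℝ (Fin n))⟫ = 0 :=
        Submodule.inner_left_of_mem_orthogonal u.2 hy'
      have h := inner_sub_left (𝕜 := ℝ) y (u : EuclideanSpace ℝ (Fin n)) (u : EuclideanSpace ℝ (Fin n))
      rw [this] at h
      have : ⟪y, (u:EuclideanSpace ℝ (Fin n))⟫ = ⟪(u:EuclideanSpace ℝ (Fin n)),(u:EuclideanSpace ℝ (Fin n))⟫ := by linarith [h]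
      rw [this, real_inner_self_eq_norm_sq]
      norm_num
    obtain ⟨w, hwS, hw⟩ := key1 u
    have h2 : ⟪y, (u : EuclideanSpace ℝ (Fin n)) - w⟫ = ‖u‖ ^ 2 := by
      rw [inner_sub_right, hy w hwS, h1]; ring
    have h3 : ‖u‖ ^ 2 ≤ ‖y‖ * ‖(u : EuclideanSpace ℝ (Fin n)) - w‖ := by
      rw [← h2]
      exact real_inner_le_norm _ _
    have h4 : ‖(u:EuclideanSpace ℝ (Fin n)) - w‖ ≤ Real.sqrt c2 * ‖u‖ := by
      have := Real.sqrt_le_sqrt hw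
      rwa [Real.sqrt_mul hc20, Real.sqrt_sq (norm_nonneg _),
        Real.sqrt_sq (norm_nonneg _)] at this
    have hun : 0 < ‖(u:EuclideanSpace ℝ (Fin n))‖ := by
      rw [norm_pos_iff]; exact hu0
    have hcoe : ‖(u:EuclideanSpace ℝ (Fin n))‖ = ‖u‖ := Submodule.norm_coe u
    have h5 : ‖u‖ ≤ Real.sqrt c2 * ‖y‖ := by
      have hh : ‖u‖ ^ 2 ≤ ‖y‖ * (Real.sqrt c2 * ‖u‖) :=
        h3.trans (mul_le_mul_of_nonneg_left h4 (norm_nonneg y))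
      have hun' : 0 < ‖u‖ := by rw [← hcoe]; exact hun
      refine le_of_mul_le_mul_right ?_ hun'
      calc ‖u‖ * ‖u‖ = ‖u‖ ^ 2 := (sq ‖u‖).symm
        _ ≤ ‖y‖ * (Real.sqrt c2 * ‖u‖) := hh
        _ = Real.sqrt c2 * ‖y‖ * ‖u‖ := by ring
    have hfin : (Real.sqrt c2 * ‖y‖)^2 = c2 * ‖y‖^2 := by
      rw [mul_pow, Real.sq_sqrt hc20]
    calc ‖((u:T) : EuclideanSpace ℝ (Fin n))‖^2 = ‖u‖^2 := by rw [hcoe]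
      _ ≤ (Real.sqrt c2 * ‖y‖)^2 := pow_le_pow_left₀ (norm_nonneg _) h5 2
      _ = c2 * ‖y‖^2 := hfin
  -- pointwise upper bound
  have upper_pt : ∀ x : EuclideanSpace ℝ (Fin n), ‖D x‖ ^ 2 ≤ c2 * ‖x‖ ^ 2 := by
    intro x
    obtain ⟨p, hp⟩ : ∃ p' : EuclideanSpace ℝ (Fin n), p' = ((S.orthogonalProjectionOnto x : S) : EuclideanSpace ℝ (Fin n)) := ⟨_, rfl⟩
    have hpS : p ∈ S := by rw [hp]; exact (S.orthogonalProjectionOnto x).2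
    obtain ⟨v, hv⟩ := memS' p hpS
    obtain ⟨q, hq⟩ : ∃ q' : T, q' = T.orthogonalProjectionOnto x := ⟨_, rfl⟩
    have hDx : D x = ((v - q : T) : EuclideanSpace ℝ (Fin n)) + ((η v : Tᗮ) : EuclideanSpace ℝ (Fin n)) := by
      simp only [hD, ContinuousLinearMap.sub_apply, ContinuousLinearMap.comp_apply,
        Submodule.subtypeL_apply]
      rw [← hp, ← hq, ← hv]
      push_cast
      abel
    have hyx : ∀ w ∈ S, ⟪x - p, w⟫ = 0 := by
      intro w hw
      have hmem : x - p ∈ Sᗮ := by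
        rw [hp]; exact S.sub_starProjection_mem_orthogonal x
      exact Submodule.inner_left_of_mem_orthogonal hw hmem
    have hvq : v - q = T.orthogonalProjectionOnto (p - x) := by
      have h1 : T.orthogonalProjectionOnto p = v := by
        rw [← hv, map_add, Submodule.orthogonalProjectionOnto_mem_subspace_eq_self,
          Submodule.orthogonalProjectionOnto_apply_of_mem_orthogonal (η v).2]
        simp
      rw [hq, map_sub, h1]
    have hb1 : ‖((v - q : T) : EuclideanSpace ℝ (Fin n))‖ ^ 2 ≤ c2 * ‖x - p‖ ^ 2 := by
      have := key2 (p - x) (fun w hw => by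
        have := hyx w hw
        rw [← neg_sub, inner_neg_left, this]; ring)
      rw [← hvq] at this
      rwa [show ‖p - x‖ = ‖x - p‖ from norm_sub_rev _ _] at this
    have hb2 : ‖((η v : Tᗮ) : EuclideanSpace ℝ (Fin n))‖ ^ 2 ≤ c2 * ‖p‖ ^ 2 := by
      have hle : ‖η v‖ ≤ σ * ‖v‖ := by rw [hσ]; exact η.le_opNorm v
      have hpn : ‖p‖ ^ 2 = ‖v‖ ^ 2 + ‖η v‖ ^ 2 := by rw [← hv, pyth]
      have : ‖η v‖^2 ≤ σ^2 * ‖v‖^2 := by nlinarith [norm_nonneg (η v), norm_nonneg v]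
      have hgoal : ‖η v‖ ^ 2 * (1 + σ^2) ≤ σ^2 * (‖v‖^2 + ‖η v‖^2) := by nlinarith
      have : ‖η v‖ ^ 2 ≤ c2 * (‖v‖^2 + ‖η v‖^2) := by
        rw [hc2, div_mul_eq_mul_div, le_div_iff₀ hden]
        nlinarith [hgoal]
      calc ‖((η v : Tᗮ) : EuclideanSpace ℝ (Fin n))‖^2 = ‖η v‖^2 := rfl
        _ ≤ c2 * (‖v‖^2 + ‖η v‖^2) := this
        _ = c2 * ‖p‖^2 := by rw [hpn]
    have hsplit : ‖D x‖ ^ 2 = ‖((v - q : T) : EuclideanSpace ℝ (Fin n))‖^2 + ‖((η v : Tᗮ) : EuclideanSpace ℝ (Fin n))‖^2 := by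
      rw [hDx, pyth]
      simp [Submodule.coe_norm]
    have hx2 : ‖x‖ ^ 2 = ‖x - p‖ ^ 2 + ‖p‖ ^ 2 := by
      have hop : ⟪x - p, p⟫ = 0 := hyx p hpS
      have : x = (x - p) + p := by abel
      calc ‖x‖^2 = ‖(x - p) + p‖^2 := by rw [← this]
        _ = ‖x-p‖^2 + ‖p‖^2 := by rw [norm_add_sq_real, hop]; ring
    rw [hsplit, hx2]
    nlinarith [hb1, hb2]
  -- upper bound on operator norm
  have upper : ‖D‖ ^ 2 ≤ c2 := by
    have hnd : ‖D‖ ≤ Real.sqrt c2 := by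
      refine D.opNorm_le_bound (Real.sqrt_nonneg _) fun x => ?_
      have := upper_pt x
      have h := Real.sqrt_le_sqrt this
      rwa [Real.sqrt_sq (norm_nonneg _), Real.sqrt_mul hc20, Real.sqrt_sq (norm_nonneg x)] at h
    calc ‖D‖^2 ≤ (Real.sqrt c2)^2 := pow_le_pow_left₀ (norm_nonneg _) hnd 2
      _ = c2 := Real.sq_sqrt hc20
  -- lower bound
  have lower : c2 ≤ ‖D‖ ^ 2 := by
    rcases eq_or_lt_of_le hσ0 with h0 | h0
    · rw [hc2, ← h0]
      have hz : (0:ℝ) ^ 2 / (1 + (0:ℝ) ^ 2) = 0 := by norm_num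
      rw [hz]
      exact sq_nonneg ‖D‖
    have key : ∀ r : ℝ, 0 ≤ r → r < σ → r^2/(1+r^2) ≤ ‖D‖^2 := by
      intro r hr0 hrσ
      obtain ⟨u, hu1, hu2⟩ := η.exists_lt_apply_of_lt_opNorm (hσ ▸ hrσ)
      obtain ⟨b, hb⟩ : ∃ b' : Tᗮ, b' = η u := ⟨_, rfl⟩
      obtain ⟨x, hx⟩ : ∃ x' : EuclideanSpace ℝ (Fin n), x' = (b : EuclideanSpace ℝ (Fin n)) := ⟨_, rfl⟩
      have ht0 : 0 < ‖b‖ := by rw [hb]; exact lt_of_le_of_lt hr0 hu2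
      have hPTx : D x = ((S.orthogonalProjectionOnto x : S) : EuclideanSpace ℝ (Fin n)) := by
        simp only [hD, ContinuousLinearMap.sub_apply, ContinuousLinearMap.comp_apply,
          Submodule.subtypeL_apply]
        rw [hx, Submodule.orthogonalProjectionOnto_apply_of_mem_orthogonal b.2]
        simp
      obtain ⟨w, hw⟩ : ∃ w' : EuclideanSpace ℝ (Fin n), w' = (u : EuclideanSpace ℝ (Fin n)) + ((η u : Tᗮ) : EuclideanSpace ℝ (Fin n)) := ⟨_, rfl⟩
      have hwS : w ∈ S := by rw [hw]; exact memS u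
      have hinner : ⟪x, w⟫ = ‖b‖^2 := by
        rw [hx, hw, hb, inner_add_right, real_inner_comm, horth u (η u),
          real_inner_self_eq_norm_sq]
        norm_num
      have hinner2 : ⟪x, w⟫ = ⟪D x, w⟫ := by
        rw [hPTx]
        have hmem : x - ((S.orthogonalProjectionOnto x : S) : EuclideanSpace ℝ (Fin n)) ∈ Sᗮ :=
          S.sub_starProjection_mem_orthogonal x
        have : ⟪x - ((S.orthogonalProjectionOnto x : S) : EuclideanSpace ℝ (Fin n)), w⟫ = 0 :=
          Submodule.inner_left_of_mem_orthogonal hwS hmem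
        have h := inner_sub_left (𝕜 := ℝ) x ((S.orthogonalProjectionOnto x : S) : EuclideanSpace ℝ (Fin n)) w
        rw [this] at h
        linarith [h]
      have hwn : ‖w‖^2 = ‖u‖^2 + ‖b‖^2 := by rw [hw, pyth, hb]
      have hDw : ⟪D x, w⟫ ≤ ‖D x‖ * ‖w‖ := real_inner_le_norm _ _
      have hDx : ‖D x‖ ≤ ‖D‖ * ‖b‖ := by
        calc ‖D x‖ ≤ ‖D‖ * ‖x‖ := D.le_opNorm x
          _ = ‖D‖ * ‖b‖ := by rw [hx]; rfl
      have hD0 : 0 ≤ ‖D‖ := norm_nonneg _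
      have hchain : ‖b‖^2 ≤ ‖D‖ * ‖b‖ * ‖w‖ := by
        rw [← hinner, hinner2]
        calc ⟪D x, w⟫ ≤ ‖D x‖ * ‖w‖ := hDw
          _ ≤ ‖D‖ * ‖b‖ * ‖w‖ := by nlinarith [norm_nonneg w, hDx]
      -- so ‖b‖ ≤ ‖D‖ * ‖w‖, square it
      have hbw : ‖b‖ ≤ ‖D‖ * ‖w‖ := by
        nlinarith [ht0, norm_nonneg w]
      have hsq : ‖b‖^2 ≤ ‖D‖^2 * (‖u‖^2 + ‖b‖^2) := by
        have := pow_le_pow_left₀ (le_of_lt ht0) hbw 2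
        calc ‖b‖^2 ≤ (‖D‖ * ‖w‖)^2 := this
          _ = ‖D‖^2 * ‖w‖^2 := by ring
          _ = ‖D‖^2 * (‖u‖^2 + ‖b‖^2) := by rw [hwn]
      have hu1' : ‖u‖^2 ≤ 1 := by nlinarith [norm_nonneg u]
      have hsq2 : ‖b‖^2 ≤ ‖D‖^2 * (1 + ‖b‖^2) := by
        nlinarith [sq_nonneg ‖D‖]
      have hrb : r < ‖b‖ := by rw [hb]; exact hu2
      have hmono : r^2/(1+r^2) ≤ ‖b‖^2/(1+‖b‖^2) := by
        rw [div_le_div_iff₀ (by positivity) (by positivity)]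
        nlinarith [hrb, hr0]
      have : ‖b‖^2/(1+‖b‖^2) ≤ ‖D‖^2 := by
        rw [div_le_iff₀ (by positivity)]
        nlinarith [hsq2]
      linarith [hmono]
    -- take limit r → σ from the left
    have hcont : ContinuousAt (fun r : ℝ => r^2/(1+r^2)) σ := by
      apply ContinuousAt.div
      · fun_prop
      · fun_prop
      · positivity
    have hne : (𝓝[<] σ).NeBot := nhdsLT_neBot σ
    have htend : Tendsto (fun r : ℝ => r^2/(1+r^2)) (𝓝[<] σ) (𝓝 c2) := by
      rw [hc2]
      exact hcont.continuousWithinAt.tendsto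
    refine le_of_tendsto htend ?_
    filter_upwards [Ioo_mem_nhdsLT_of_mem (Set.mem_Ioc.mpr ⟨h0, le_refl σ⟩)] with r hr
    exact key r hr.1.le hr.2
  linarith [upper, lower]
end
end

section
/- Let h ≥ 0, let T = (a₀,…,a_{m+1}) be an (m+2)-tuple of points in ℝⁿ, a ∈ ℝⁿ, S an m-dimensional linear subspace of ℝⁿ, and suppose the convex hull ΔT of {a₀,…,a_{m+1}} is contained in the slab { b ∈ ℝⁿ : |P_{S^⊥}(b − a)| ≤ h }. Then h_min(T) ≤ (m+2) h, where h_min(T) is the minimum over j ∈ {0,…,m+1} of the distance from a_j to the affine hull of the remaining m+1 points. -/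
open MeasureTheory Metric Filter Topology
open scoped ENNReal

noncomputable section

/-- `h_min(T)`: the minimal distance from a vertex of the tuple to the affine hull of
the remaining vertices. -/
def hmin {n m : ℕ} (T : Fin (m + 2) → EuclideanSpace ℝ (Fin n)) : ℝ :=
  ⨅ j, Metric.infDist (T j)
    ((affineSpan ℝ (T '' {i | i ≠ j}) : AffineSubspace ℝ (EuclideanSpace ℝ (Fin n))) :
      Set (EuclideanSpace ℝ (Fin n)))

theorem stmt8 {n m : ℕ} (hm : 1 ≤ m) (hmn : m < n) (h : ℝ) (hh : 0 ≤ h)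
    (T : Fin (m + 2) → EuclideanSpace ℝ (Fin n))
    (a : EuclideanSpace ℝ (Fin n))
    (S : Submodule ℝ (EuclideanSpace ℝ (Fin n))) (hS : Module.finrank ℝ S = m)
    (hslab : convexHull ℝ (Set.range T) ⊆
      {b : EuclideanSpace ℝ (Fin n) |
        ‖(Submodule.orthogonalProjectionOnto Sᗮ (b - a) : EuclideanSpace ℝ (Fin n))‖ ≤ h}) :
    hmin T ≤ (m + 2) * h := by
  classical
  set v : Fin (m + 2) → EuclideanSpace ℝ (Fin n) := fun i => (Submodule.orthogonalProjectionOnto S (T i - a) : EuclideanSpace ℝ (Fin n)) with hvdef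
  set r : Fin (m + 2) → EuclideanSpace ℝ (Fin n) := fun i => (T i - a) - v i with hrdef
  have hrle : ∀ i, ‖r i‖ ≤ h := by
    intro i
    have hmem : T i ∈ convexHull ℝ (Set.range T) := subset_convexHull ℝ _ ⟨i, rfl⟩
    have h1 := hslab hmem
    have h2 : (Submodule.orthogonalProjectionOnto Sᗮ (T i - a) : EuclideanSpace ℝ (Fin n)) = r i := by
      exact Submodule.starProjection_orthogonal_val (K := S) (T i - a)
    rw [← h2]; exact h1
  -- linear dependence of the m+1 difference vectors inside S
  obtain ⟨g, hgsum, i₀, hgi₀⟩ : ∃ g : Fin (m + 1) → ℝ,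
      ∑ i, g i • (Submodule.orthogonalProjectionOnto S (T i.succ - a)
        - Submodule.orthogonalProjectionOnto S (T 0 - a)) = 0 ∧ ∃ i, g i ≠ 0 := by
    rw [← Fintype.not_linearIndependent_iff]
    intro hli
    have := hli.fintype_card_le_finrank
    rw [hS, Fintype.card_fin] at this
    omega
  have hcv' : ∑ i : Fin (m + 1), g i • (v i.succ - v 0) = 0 := by
    have := congrArg ((↑) : S → EuclideanSpace ℝ (Fin n)) hgsum
    simpa [hvdef] using this
  set c : Fin (m + 2) → ℝ := Fin.cons (-∑ i, g i) g with hcdef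
  have hc0 : ∑ i, c i = 0 := by
    simp [hcdef, Fin.sum_cons]
  have hcv : ∑ i, c i • v i = 0 := by
    rw [Fin.sum_univ_succ]
    simp only [hcdef, Fin.cons_zero, Fin.cons_succ]
    have h3 : ∑ i : Fin (m + 1), g i • v i.succ - ∑ i : Fin (m + 1), g i • v 0 = 0 := by
      rw [← Finset.sum_sub_distrib]
      simpa [smul_sub] using hcv'
    rw [neg_smul, Finset.sum_smul]
    rw [neg_add_eq_zero]
    exact (sub_eq_zero.mp h3).symm
  have hcne : c i₀.succ ≠ 0 := by simpa [hcdef, Fin.cons_succ] using hgi₀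
  obtain ⟨j, -, hjmax⟩ := Finset.exists_max_image Finset.univ (fun i => |c i|)
    ⟨0, Finset.mem_univ 0⟩
  have hcjpos : 0 < |c j| := lt_of_lt_of_le (abs_pos.2 hcne) (hjmax _ (Finset.mem_univ _))
  have hcj0 : c j ≠ 0 := fun hc => by simp [hc] at hcjpos
  set wgt : Fin (m + 2) → ℝ := fun i => -c i / c j with hwdef
  have herase : ∑ i ∈ Finset.univ.erase j, c i = -c j := by
    have := Finset.sum_erase_eq_sub (f := c) (Finset.mem_univ j)
    rw [hc0] at this
    simpa using this
  have hwsum : ∑ i ∈ Finset.univ.erase j, wgt i = 1 := by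
    rw [hwdef, ← Finset.sum_div, Finset.sum_neg_distrib, herase, neg_neg, div_self hcj0]
  set q : EuclideanSpace ℝ (Fin n) := ∑ i ∈ Finset.univ.erase j, wgt i • T i with hqdef
  -- q lies in the affine span of the other vertices
  have hqmem : q ∈ (affineSpan ℝ (T '' {i | i ≠ j}) : AffineSubspace ℝ (EuclideanSpace ℝ (Fin n))) := by
    have hiff : ∀ x : Fin (m + 2), x ∈ Finset.univ.erase j ↔ x ≠ j := by
      intro x; simp [Finset.mem_erase]
    have hsum' : ∑ i' : {i : Fin (m + 2) // i ≠ j}, wgt i'.1 = 1 := by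
      rw [← Finset.sum_subtype _ hiff (fun i => wgt i)]
      exact hwsum
    have hq' : q = ∑ i' : {i : Fin (m + 2) // i ≠ j}, wgt i'.1 • T i'.1 :=
      Finset.sum_subtype _ hiff _
    have hrange : Set.range (fun i' : {i : Fin (m + 2) // i ≠ j} => T i'.1)
        = T '' {i | i ≠ j} := by
      rw [show (fun i' : {i : Fin (m + 2) // i ≠ j} => T i'.1) = T ∘ Subtype.val from rfl,
        Set.range_comp, Subtype.range_coe_subtype]
    have hmem := affineCombination_mem_affineSpan (s := (Finset.univ : Finset {i : Fin (m + 2) // i ≠ j})) hsum'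
      (fun i' : {i : Fin (m + 2) // i ≠ j} => T i'.1)
    rw [Finset.univ.affineCombination_eq_linear_combination _ _ hsum'] at hmem
    rw [hq', ← hrange]
    exact hmem
  -- the projected points combine to v j
  have h1 : ∑ i ∈ Finset.univ.erase j, c i • v i = -(c j • v j) := by
    have := Finset.sum_erase_eq_sub (f := fun i => c i • v i) (Finset.mem_univ j)
    rw [hcv] at this
    simpa using this
  have hvq : ∑ i ∈ Finset.univ.erase j, wgt i • v i = v j := by
    have : ∑ i ∈ Finset.univ.erase j, wgt i • v i
        = (-(c j)⁻¹) • ∑ i ∈ Finset.univ.erase j, c i • v i := by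
      rw [Finset.smul_sum]
      refine Finset.sum_congr rfl fun i _ => ?_
      rw [smul_smul, hwdef]
      congr 1
      field_simp
    rw [this, h1]
    simp [smul_smul, inv_mul_cancel₀ hcj0]
  have hTi : ∀ i, T i = a + v i + r i := by
    intro i
    show T i = a + v i + (T i - a - v i)
    abel
  have hq2 : q = a + v j + ∑ i ∈ Finset.univ.erase j, wgt i • r i := by
    calc q = ∑ i ∈ Finset.univ.erase j, wgt i • (a + v i + r i) :=
          Finset.sum_congr rfl fun i _ => by rw [← hTi]
    _ = (∑ i ∈ Finset.univ.erase j, wgt i) • a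
          + (∑ i ∈ Finset.univ.erase j, wgt i • v i)
          + ∑ i ∈ Finset.univ.erase j, wgt i • r i := by
        simp only [smul_add, Finset.sum_add_distrib, Finset.sum_smul]
    _ = a + v j + ∑ i ∈ Finset.univ.erase j, wgt i • r i := by
        rw [hwsum, hvq, one_smul]
  have hdiff : T j - q = r j - ∑ i ∈ Finset.univ.erase j, wgt i • r i := by
    rw [hq2, hTi j]; abel
  have hcard : (Finset.univ.erase j).card = m + 1 := by
    rw [Finset.card_erase_of_mem (Finset.mem_univ _), Finset.card_univ, Fintype.card_fin]
    omega
  have hnorm : ‖T j - q‖ ≤ (m + 2) * h := by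
    rw [hdiff]
    have h2 : ‖∑ i ∈ Finset.univ.erase j, wgt i • r i‖ ≤ (m + 1) * h := by
      calc ‖∑ i ∈ Finset.univ.erase j, wgt i • r i‖
          ≤ ∑ i ∈ Finset.univ.erase j, ‖wgt i • r i‖ := norm_sum_le _ _
      _ ≤ ∑ _i ∈ Finset.univ.erase j, h := by
          refine Finset.sum_le_sum fun i _ => ?_
          rw [norm_smul]
          have hw1 : ‖wgt i‖ ≤ 1 := by
            rw [Real.norm_eq_abs, hwdef]
            simp only [abs_div, abs_neg]
            rw [div_le_one hcjpos]
            exact hjmax _ (Finset.mem_univ _)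
          calc ‖wgt i‖ * ‖r i‖ ≤ 1 * h :=
                mul_le_mul hw1 (hrle i) (norm_nonneg _) zero_le_one
          _ = h := one_mul h
      _ = (m + 1) * h := by
          rw [Finset.sum_const, hcard, nsmul_eq_mul]
          push_cast
          ring
    calc ‖r j - ∑ i ∈ Finset.univ.erase j, wgt i • r i‖
        ≤ ‖r j‖ + ‖∑ i ∈ Finset.univ.erase j, wgt i • r i‖ := norm_sub_le _ _
    _ ≤ h + (m + 1) * h := add_le_add (hrle j) h2
    _ = (m + 2) * h := by push_cast; ring
  have hfin : Metric.infDist (T j)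
      ((affineSpan ℝ (T '' {i | i ≠ j}) : AffineSubspace ℝ (EuclideanSpace ℝ (Fin n))) : Set (EuclideanSpace ℝ (Fin n))) ≤ (m + 2) * h := by
    refine le_trans (Metric.infDist_le_dist_of_mem hqmem) ?_
    rw [dist_eq_norm]
    exact hnorm
  unfold hmin
  refine ciInf_le_of_le ?_ j hfin
  refine ⟨0, fun x hx => ?_⟩
  obtain ⟨i, rfl⟩ := hx
  exact Metric.infDist_nonneg
end
end

section
/- Let T = (a₀,…,a_{m+1}) ∈ (ℝⁿ)^{m+2} with h_min(T) > 0. Then κ_min(T) ≤ 2 κ_h(T), i.e. min over i of |(a₁−a₀) ∧ ⋯ ∧ (a_{m+1}−a₀)| / ∏_{j≠i}|a_j − a_i| is at most 2 h_min(T)/diam(ΔT). -/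
open MeasureTheory Metric Filter Topology
open scoped ENNReal

noncomputable section

/-- Norm of the wedge product `v₁ ∧ ⋯ ∧ v_m` (square root of the Gram determinant). -/
def wedgeNorm {n m : ℕ} (v : Fin m → EuclideanSpace ℝ (Fin n)) : ℝ :=
  Real.sqrt ((Matrix.of fun i j => (inner ℝ (v i) (v j) : ℝ)).det)

/-- `κ(T) = H^{m+1}(ΔT)/diam(ΔT)^{m+1}` (with the convention `0/0 = 0`). -/
def kappa {n m : ℕ} (T : Fin (m + 2) → EuclideanSpace ℝ (Fin n)) : ℝ :=
  (μH[((m : ℝ) + 1)] (convexHull ℝ (Set.range T))).toReal /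
    Metric.diam (Set.range T) ^ (m + 1)

/-- `pmsin_i(T)`: the "m-dimensional sine" at the vertex `i`. -/
def pmsin {n m : ℕ} (a : Fin (m + 2) → EuclideanSpace ℝ (Fin n)) (i : Fin (m + 2)) : ℝ :=
  wedgeNorm (fun j : Fin (m + 1) => a (i.succAbove j) - a i) /
    ∏ j ∈ Finset.univ.erase i, ‖a j - a i‖

/-- `κ_min(T)`. -/
def kmin {n m : ℕ} (a : Fin (m + 2) → EuclideanSpace ℝ (Fin n)) : ℝ :=
  if 0 < hmin a then ⨅ i, pmsin a i else 0

/-- `κ_max(T)`. -/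
def kmax {n m : ℕ} (a : Fin (m + 2) → EuclideanSpace ℝ (Fin n)) : ℝ :=
  if 0 < hmin a then ⨆ i, pmsin a i else 0

/-- `κ_dls(T)`: least-squares distance to affine `m`-planes, normalized by the diameter. -/
def kdls {n m : ℕ} (a : Fin (m + 2) → EuclideanSpace ℝ (Fin n)) : ℝ :=
  if 0 < hmin a then
    sInf {x : ℝ | ∃ L : AffineSubspace ℝ (EuclideanSpace ℝ (Fin n)),
        (L : Set (EuclideanSpace ℝ (Fin n))).Nonempty ∧
        Module.finrank ℝ L.direction = m ∧
        x = Real.sqrt (∑ i, Metric.infDist (a i) (L : Set (EuclideanSpace ℝ (Fin n))) ^ 2)} /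
      Metric.diam (Set.range a)
  else 0

/-- `κ_h(T) = h_min(T)/diam(ΔT)`. -/
def kh {n m : ℕ} (a : Fin (m + 2) → EuclideanSpace ℝ (Fin n)) : ℝ :=
  if 0 < hmin a then hmin a / Metric.diam (Set.range a) else 0


def gram {n r : ℕ} (v : Fin r → EuclideanSpace ℝ (Fin n)) : Matrix (Fin r) (Fin r) ℝ :=
  Matrix.of fun i j => (inner ℝ (v i) (v j) : ℝ)

lemma gram_mul {n r : ℕ} (v : Fin r → EuclideanSpace ℝ (Fin n)) (B : Matrix (Fin r) (Fin r) ℝ) :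
    gram (fun i => ∑ j, B i j • v j) = B * gram v * B.transpose := by
  ext i k
  simp only [gram, Matrix.of_apply, Matrix.mul_apply, Matrix.transpose_apply]
  rw [sum_inner]
  simp only [real_inner_smul_left, inner_sum, real_inner_smul_right, Finset.mul_sum,
    Finset.sum_mul]
  conv_rhs => rw [Finset.sum_comm]
  apply Finset.sum_congr rfl; intro j _
  apply Finset.sum_congr rfl; intro l _
  ring

lemma gram_det_peel {n r : ℕ} (v : Fin (r+1) → EuclideanSpace ℝ (Fin n)) :
    (gram v).det =
      ‖v (Fin.last r) - (Submodule.orthogonalProjectionOnto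
          (Submodule.span ℝ (Set.range (v ∘ Fin.castSucc))) (v (Fin.last r)) : EuclideanSpace ℝ (Fin n))‖ ^ 2 *
        (gram (v ∘ Fin.castSucc)).det := by
  set K := Submodule.span ℝ (Set.range (v ∘ Fin.castSucc)) with hK
  set w : EuclideanSpace ℝ (Fin n) := v (Fin.last r) with hw
  set p : EuclideanSpace ℝ (Fin n) := (Submodule.orthogonalProjectionOnto K w : EuclideanSpace ℝ (Fin n)) with hp
  have hpK : p ∈ K := (Submodule.orthogonalProjectionOnto K w).2
  obtain ⟨c, hc⟩ := (Submodule.mem_span_range_iff_exists_fun ℝ).mp hpK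
  set w' : EuclideanSpace ℝ (Fin n) := w - p with hw'
  have hw'orth : w' ∈ Kᗮ := Submodule.sub_starProjection_mem_orthogonal w
  set B : Matrix (Fin (r+1)) (Fin (r+1)) ℝ := fun i j =>
    if i = Fin.last r then (if hj : j = Fin.last r then 1 else -c (j.castPred hj))
    else if j = i then 1 else 0 with hB
  have hvB : ∀ i, Function.update v (Fin.last r) w' i = ∑ j, B i j • v j := by
    intro i
    by_cases hi : i = Fin.last r
    · subst hi
      rw [Function.update_self, Fin.sum_univ_castSucc]
      have h1 : ∀ j : Fin r, B (Fin.last r) (Fin.castSucc j) • v (Fin.castSucc j)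
          = -(c j • v (Fin.castSucc j)) := by
        intro j
        have : B (Fin.last r) (Fin.castSucc j) = -c j := by
          simp [hB, (Fin.castSucc_lt_last j).ne]
        rw [this, neg_smul]
      have h2 : B (Fin.last r) (Fin.last r) = 1 := by simp [hB]
      simp only [h1, h2, one_smul, Finset.sum_neg_distrib]
      rw [hw', hw, ← hc]
      simp only [Function.comp]
      abel
    · rw [Function.update_of_ne hi]
      rw [Finset.sum_eq_single i]
      · have : B i i = 1 := by simp [hB, hi]
        rw [this, one_smul]
      · intro j _ hji
        have : B i j = 0 := by simp [hB, hi, hji]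
        rw [this, zero_smul]
      · intro h; exact absurd (Finset.mem_univ _) h
  have hdetB : B.det = 1 := by
    have htri : B.BlockTriangular OrderDual.toDual := by
      intro i j hij
      have hij' : i < j := hij
      have hi : i ≠ Fin.last r := (hij'.trans_le (Fin.le_last j)).ne
      simp [hB, hi, hij'.ne']
    rw [Matrix.det_of_lowerTriangular B htri]
    apply Finset.prod_eq_one
    intro i _
    by_cases hi : i = Fin.last r <;> simp [hB, hi]
  have hdet_eq : (gram (Function.update v (Fin.last r) w')).det = (gram v).det := by
    have : gram (Function.update v (Fin.last r) w') = B * gram v * B.transpose := by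
      rw [funext hvB]; exact gram_mul v B
    rw [this, Matrix.det_mul, Matrix.det_mul, Matrix.det_transpose, hdetB]
    ring
  set v' : Fin (r+1) → EuclideanSpace ℝ (Fin n) := Function.update v (Fin.last r) w' with hv'
  have e1 : v' (Fin.last r) = w' := Function.update_self _ _ _
  have hrow : ∀ j : Fin (r+1), j ≠ Fin.last r → gram v' (Fin.last r) j = 0 := by
    intro j hj
    have hvj : v' j = v j := Function.update_of_ne hj _ _
    have hjK : v j ∈ K := by
      apply Submodule.subset_span
      exact ⟨j.castPred hj, congrArg v (Fin.castSucc_castPred j hj)⟩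
    have e2 : gram v' (Fin.last r) j = (inner ℝ (v' (Fin.last r)) (v' j) : ℝ) := rfl
    rw [e2, e1, hvj, real_inner_comm]
    exact hw'orth (v j) hjK
  have hsub : (gram v').submatrix (Fin.last r).succAbove (Fin.last r).succAbove
      = gram (v ∘ Fin.castSucc) := by
    ext i j
    have e3 : ((gram v').submatrix (Fin.last r).succAbove (Fin.last r).succAbove) i j
        = (inner ℝ (v' ((Fin.last r).succAbove i)) (v' ((Fin.last r).succAbove j)) : ℝ) := rfl
    rw [e3, Fin.succAbove_last, hv', Function.update_of_ne (Fin.castSucc_lt_last i).ne,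
      Function.update_of_ne (Fin.castSucc_lt_last j).ne]
    rfl
  have hdiag : gram v' (Fin.last r) (Fin.last r) = ‖w'‖ ^ 2 := by
    have e4 : gram v' (Fin.last r) (Fin.last r)
        = (inner ℝ (v' (Fin.last r)) (v' (Fin.last r)) : ℝ) := rfl
    rw [e4, e1, real_inner_self_eq_norm_sq]
  rw [← hdet_eq, Matrix.det_succ_row (gram v') (Fin.last r)]
  rw [Finset.sum_eq_single (Fin.last r)]
  · rw [hdiag, hsub]
    have e5 : (-1 : ℝ) ^ ((Fin.last r : ℕ) + (Fin.last r : ℕ)) = 1 :=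
      Even.neg_one_pow ⟨r, by simp⟩
    rw [e5]; ring
  · intro j _ hj
    rw [hrow j hj]; ring
  · intro h; exact absurd (Finset.mem_univ _) h

lemma gram_det_nonneg {n : ℕ} : ∀ {r : ℕ} (v : Fin r → EuclideanSpace ℝ (Fin n)), 0 ≤ (gram v).det := by
  intro r
  induction r with
  | zero => intro v; simp [Matrix.det_fin_zero]
  | succ r ih =>
    intro v
    rw [gram_det_peel v]
    exact mul_nonneg (sq_nonneg _) (ih _)

lemma dist_orthProj_le {n : ℕ} (K : Submodule ℝ (EuclideanSpace ℝ (Fin n))) (x : EuclideanSpace ℝ (Fin n)) {u : EuclideanSpace ℝ (Fin n)} (hu : u ∈ K) :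
    ‖x - (Submodule.orthogonalProjectionOnto K x : EuclideanSpace ℝ (Fin n))‖ ≤ ‖x - u‖ := by
  rw [← Submodule.starProjection_apply, Submodule.starProjection_minimal]
  exact ciInf_le ⟨0, by rintro _ ⟨y, rfl⟩; positivity⟩ (⟨u, hu⟩ : K)

lemma gram_sqrt_hadamard {n : ℕ} : ∀ {r : ℕ} (v : Fin r → EuclideanSpace ℝ (Fin n)),
    Real.sqrt (gram v).det ≤ ∏ i, ‖v i‖ := by
  intro r
  induction r with
  | zero => intro v; simp [Matrix.det_fin_zero]
  | succ r ih =>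
    intro v
    rw [gram_det_peel v, Real.sqrt_mul (sq_nonneg _), Real.sqrt_sq (norm_nonneg _),
      Fin.prod_univ_castSucc]
    rw [mul_comm (∏ i : Fin r, ‖v i.castSucc‖) ‖v (Fin.last r)‖]
    apply mul_le_mul
    · simpa using dist_orthProj_le _ (v (Fin.last r)) (Submodule.zero_mem _)
    · exact ih _
    · exact Real.sqrt_nonneg _
    · exact norm_nonneg _

lemma gram_sqrt_peel_le {n r : ℕ} (v : Fin (r+1) → EuclideanSpace ℝ (Fin n)) :
    Real.sqrt (gram v).det ≤
      ‖v (Fin.last r) - (Submodule.orthogonalProjectionOnto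
          (Submodule.span ℝ (Set.range (v ∘ Fin.castSucc))) (v (Fin.last r)) : EuclideanSpace ℝ (Fin n))‖ *
        ∏ i : Fin r, ‖v (Fin.castSucc i)‖ := by
  rw [gram_det_peel v, Real.sqrt_mul (sq_nonneg _), Real.sqrt_sq (norm_nonneg _)]
  exact mul_le_mul_of_nonneg_left (gram_sqrt_hadamard _) (norm_nonneg _)

lemma gram_det_perm {n r : ℕ} (v : Fin r → EuclideanSpace ℝ (Fin n)) (σ : Equiv.Perm (Fin r)) :
    (gram (v ∘ σ)).det = (gram v).det := by
  have : gram (v ∘ σ) = (gram v).submatrix σ σ := rfl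
  rw [this, Matrix.det_submatrix_equiv_self]


set_option maxHeartbeats 1000000 in
theorem stmt11 {n m : ℕ} (hm : 1 ≤ m) (hmn : m < n)
    (a : Fin (m + 2) → EuclideanSpace ℝ (Fin n)) (hpos : 0 < hmin a) :
    kmin a ≤ 2 * kh a := by
  classical
  set h : Fin (m+2) → ℝ := fun j => Metric.infDist (a j)
    ((affineSpan ℝ (a '' {i | i ≠ j}) : AffineSubspace ℝ (EuclideanSpace ℝ (Fin n))) :
      Set (EuclideanSpace ℝ (Fin n))) with hh
  have hbdd : BddBelow (Set.range h) := ⟨0, by rintro _ ⟨j, rfl⟩; exact Metric.infDist_nonneg⟩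
  have h_ge : ∀ j, hmin a ≤ h j := fun j => ciInf_le hbdd j
  have hne : ∀ j k : Fin (m+2), j ≠ k → a j ≠ a k := by
    intro j k hjk heq
    have hmem : a j ∈ ((affineSpan ℝ (a '' {i | i ≠ j}) : AffineSubspace ℝ
        (EuclideanSpace ℝ (Fin n))) : Set (EuclideanSpace ℝ (Fin n))) :=
      subset_affineSpan ℝ _ ⟨k, hjk.symm, heq.symm⟩
    have h0 : h j = 0 := Metric.infDist_zero_of_mem hmem
    have := h_ge j
    rw [h0] at this
    linarith
  obtain ⟨ℓ, hℓmin⟩ := Finite.exists_min h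
  have hminℓ : hmin a = h ℓ := le_antisymm (h_ge ℓ) (le_ciInf hℓmin)
  obtain ⟨z, hz⟩ := exists_ne ℓ
  obtain ⟨i₀, hi₀mem, hi₀max⟩ := Finset.exists_max_image (Finset.univ.erase ℓ)
    (fun j => dist (a ℓ) (a j)) ⟨z, Finset.mem_erase.mpr ⟨hz, Finset.mem_univ _⟩⟩
  have hi₀ : i₀ ≠ ℓ := (Finset.mem_erase.mp hi₀mem).1
  set M := dist (a ℓ) (a i₀) with hM
  have hMpos : 0 < M := dist_pos.mpr (hne ℓ i₀ hi₀.symm)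
  have hdistle : ∀ j, dist (a ℓ) (a j) ≤ M := by
    intro j
    by_cases hj : j = ℓ
    · subst hj; simpa using hMpos.le
    · exact hi₀max j (Finset.mem_erase.mpr ⟨hj, Finset.mem_univ _⟩)
  have hdiam2 : Metric.diam (Set.range a) ≤ 2 * M := by
    apply Metric.diam_le_of_forall_dist_le (by positivity)
    rintro x ⟨jx, rfl⟩ y ⟨jy, rfl⟩
    calc dist (a jx) (a jy) ≤ dist (a jx) (a ℓ) + dist (a ℓ) (a jy) := dist_triangle _ _ _
      _ ≤ M + M := add_le_add (by rw [dist_comm]; exact hdistle jx) (hdistle jy)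
      _ = 2 * M := by ring
  have hdiam_pos : 0 < Metric.diam (Set.range a) :=
    lt_of_lt_of_le hMpos (Metric.dist_le_diam_of_mem
      ((Set.finite_range a).isBounded) ⟨ℓ, rfl⟩ ⟨i₀, rfl⟩)
  -- the family of edge vectors at `i₀`, permuted so that the `ℓ`-edge is last
  set v : Fin (m+1) → EuclideanSpace ℝ (Fin n) := fun j => a (i₀.succAbove j) - a i₀ with hv
  obtain ⟨j₀, hj₀⟩ := Fin.exists_succAbove_eq (show ℓ ≠ i₀ from hi₀.symm)
  set σ : Equiv.Perm (Fin (m+1)) := Equiv.swap j₀ (Fin.last m) with hσ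
  set wv : Fin (m+1) → EuclideanSpace ℝ (Fin n) := v ∘ σ with hwv
  have hwlast : wv (Fin.last m) = a ℓ - a i₀ := by
    show v (σ (Fin.last m)) = _
    rw [hσ, Equiv.swap_apply_right, hv]
    simp [hj₀]
  set K := Submodule.span ℝ (Set.range (wv ∘ Fin.castSucc)) with hKdef
  set D := ‖wv (Fin.last m) - (Submodule.orthogonalProjectionOnto K (wv (Fin.last m)) :
    EuclideanSpace ℝ (Fin n))‖ with hD
  have hDnn : 0 ≤ D := norm_nonneg _
  -- wedge bound
  have hwedge : wedgeNorm v ≤ D * ∏ i : Fin m, ‖wv (Fin.castSucc i)‖ := by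
    have h1 : wedgeNorm v = Real.sqrt (gram wv).det := by
      show Real.sqrt (gram v).det = _
      rw [← gram_det_perm v σ]
    rw [h1]
    exact gram_sqrt_peel_le wv
  -- D is at most h ℓ = hmin a
  have hDle : D ≤ hmin a := by
    rw [hminℓ, hh]
    have hSmem : a i₀ ∈ a '' {i | i ≠ ℓ} := ⟨i₀, hi₀, rfl⟩
    have hi₀S : a i₀ ∈ affineSpan ℝ (a '' {i | i ≠ ℓ}) := subset_affineSpan ℝ _ hSmem
    have key : ∀ y ∈ ((affineSpan ℝ (a '' {i | i ≠ ℓ}) : AffineSubspace ℝ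
        (EuclideanSpace ℝ (Fin n))) : Set (EuclideanSpace ℝ (Fin n))), D ≤ dist (a ℓ) y := by
      intro y hy
      have hu : y -ᵥ a i₀ ∈ vectorSpan ℝ (a '' {i | i ≠ ℓ}) := by
        have := AffineSubspace.vsub_mem_direction hy hi₀S
        rwa [direction_affineSpan] at this
      have hsubK : vectorSpan ℝ (a '' {i | i ≠ ℓ}) ≤ K := by
        rw [vectorSpan_eq_span_vsub_set_right ℝ hSmem]
        apply Submodule.span_le.mpr
        rintro x ⟨q, ⟨k, hk, rfl⟩, rfl⟩
        show a k - a i₀ ∈ (K : Set (EuclideanSpace ℝ (Fin n)))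
        by_cases hki : k = i₀
        · subst hki; simp only [sub_self]; exact K.zero_mem
        · obtain ⟨j, hj⟩ := Fin.exists_succAbove_eq (show k ≠ i₀ from hki)
          have hjj₀ : j ≠ j₀ := by
            intro hjeq; subst hjeq
            exact (hk : k ≠ ℓ) (hj.symm.trans hj₀)
          have hσj : σ j ≠ Fin.last m := by
            by_cases hjl : j = Fin.last m
            · subst hjl
              rw [hσ, Equiv.swap_apply_right]
              intro hcon; exact hjj₀ hcon.symm
            · rw [hσ, Equiv.swap_apply_of_ne_of_ne hjj₀ hjl]; exact hjl
          apply Submodule.subset_span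
          refine ⟨(σ j).castPred hσj, ?_⟩
          show wv (Fin.castSucc ((σ j).castPred hσj)) = a k - a i₀
          rw [Fin.castSucc_castPred]
          show v (σ (σ j)) = a k - a i₀
          rw [hσ, Equiv.swap_apply_self, hv]
          simp [hj]
      have huK : y - a i₀ ∈ K := hsubK hu
      calc D ≤ ‖wv (Fin.last m) - (y - a i₀)‖ := dist_orthProj_le K _ huK
        _ = dist (a ℓ) y := by
            rw [hwlast, dist_eq_norm]
            congr 1
            abel
    by_contra hcon
    push_neg at hcon
    obtain ⟨y, hy, hylt⟩ := (Metric.infDist_lt_iff ⟨a i₀, hi₀S⟩).mp hcon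
    exact absurd hylt (not_lt.mpr (key y hy))
  -- norms positive
  have hvpos : ∀ j : Fin (m+1), 0 < ‖v j‖ := by
    intro j
    rw [hv]
    simp only [norm_pos_iff]
    exact sub_ne_zero.mpr (hne _ _ (Fin.succAbove_ne i₀ j))
  -- products
  have hP : ∏ j ∈ Finset.univ.erase i₀, ‖a j - a i₀‖ = ∏ j : Fin (m+1), ‖v j‖ := by
    symm
    apply Finset.prod_bij (fun (j : Fin (m+1)) _ => i₀.succAbove j)
    · intro j _; exact Finset.mem_erase.mpr ⟨Fin.succAbove_ne i₀ j, Finset.mem_univ _⟩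
    · intro j1 _ j2 _ hj; exact Fin.succAbove_right_injective hj
    · intro b hb
      obtain ⟨j, hj⟩ := Fin.exists_succAbove_eq (Finset.mem_erase.mp hb).1
      exact ⟨j, Finset.mem_univ _, hj⟩
    · intro j _; rw [hv]
  have hQ : ∏ j : Fin (m+1), ‖v j‖
      = (∏ i : Fin m, ‖wv (Fin.castSucc i)‖) * ‖wv (Fin.last m)‖ := by
    rw [← Fin.prod_univ_castSucc (fun i => ‖wv i‖)]
    exact Fintype.prod_equiv σ _ _ (fun i => rfl) |>.symm
  have hQpos : 0 < ∏ i : Fin m, ‖wv (Fin.castSucc i)‖ := by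
    apply Finset.prod_pos; intro i _; exact hvpos _
  have hwlpos : 0 < ‖wv (Fin.last m)‖ := hvpos _
  have hwlM : ‖wv (Fin.last m)‖ = M := by rw [hwlast, hM, dist_eq_norm]
  -- bound pmsin at i₀
  have hpms : pmsin a i₀ ≤ hmin a / M := by
    unfold pmsin
    have hnum : wedgeNorm (fun j : Fin (m + 1) => a (i₀.succAbove j) - a i₀) = wedgeNorm v := rfl
    rw [hnum, hP, hQ]
    calc wedgeNorm v / ((∏ i : Fin m, ‖wv (Fin.castSucc i)‖) * ‖wv (Fin.last m)‖)
        ≤ (D * ∏ i : Fin m, ‖wv (Fin.castSucc i)‖) /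
            ((∏ i : Fin m, ‖wv (Fin.castSucc i)‖) * ‖wv (Fin.last m)‖) :=
          (div_le_div_iff_of_pos_right (mul_pos hQpos hwlpos)).mpr hwedge
      _ = D / ‖wv (Fin.last m)‖ := by
          rw [mul_comm D (∏ i : Fin m, ‖wv (Fin.castSucc i)‖)]
          rw [mul_div_mul_left _ _ (ne_of_gt hQpos)]
      _ ≤ hmin a / M := by
          rw [hwlM]
          exact (div_le_div_iff_of_pos_right hMpos).mpr hDle
  -- conclude
  have hk1 : kmin a ≤ pmsin a i₀ := by
    rw [kmin, if_pos hpos]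
    apply ciInf_le ⟨0, ?_⟩ i₀
    rintro _ ⟨j, rfl⟩
    unfold pmsin
    apply div_nonneg (Real.sqrt_nonneg _)
    apply Finset.prod_nonneg; intro k _; exact norm_nonneg _
  have hk2 : hmin a / M ≤ 2 * kh a := by
    rw [kh, if_pos hpos]
    have he : 2 * (hmin a / Metric.diam (Set.range a))
        = (2 * hmin a) / Metric.diam (Set.range a) := by ring
    rw [he, div_le_div_iff₀ hMpos hdiam_pos]
    nlinarith [hpos, hdiam2, hMpos]
  calc kmin a ≤ pmsin a i₀ := hk1
    _ ≤ hmin a / M := hpms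
    _ ≤ 2 * kh a := hk2
end
end

section
/- Let T be an m-dimensional linear subspace of ℝⁿ, f : ℝ^m → ℝ^{n−m} (identified with a map T → T^⊥ via orthonormal coordinates), F = p* + q* ∘ f the graph map, Σ ⊆ im F, and a ∈ Σ with Tan(Σ,a) an m-dimensional subspace. Suppose f is differentiable at x = p(a). Then for any b ∈ Σ with y = p(b): (1 − ‖Df(x)‖/(1+‖Df(x)‖²)^{1/2}) · |f(y) − f(x) − Df(x)(y−x)| ≤ |P_{Tan(Σ,a)^⊥}(b − a)| ≤ |f(y) − f(x) − Df(x)(y−x)|. -/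
open MeasureTheory Metric Filter Topology Asymptotics
open scoped ENNReal RealInnerProductSpace

noncomputable section

theorem stmt15_arith (s t A B N ρ : ℝ) (hs0 : 0 ≤ s) (hA0 : 0 ≤ A) (hB0 : 0 ≤ B)
    (hN0 : 0 ≤ N) (hρ0 : 0 ≤ ρ) (ht0 : 0 < t) (ht2 : t ^ 2 = 1 + N ^ 2)
    (hs2 : s ^ 2 = A ^ 2 + B ^ 2) (hsB : s ^ 2 ≤ ρ * B) (hBN : B ≤ N * A) :
    s ≤ N * ρ / t := by
  rw [le_div_iff₀ ht0]
  by_cases hB : B = 0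
  · have hgz : s = 0 := by nlinarith
    rw [hgz, zero_mul]; positivity
  · have hBpos : 0 < B := lt_of_le_of_ne hB0 (Ne.symm hB)
    have hstep : (s * t) ^ 2 * B ^ 2 ≤ (N * ρ) ^ 2 * B ^ 2 := by
      have e1 : (s * t) ^ 2 = (A ^ 2 + B ^ 2) * (1 + N ^ 2) := by rw [mul_pow, ht2, hs2]
      have hB2 : B ^ 2 ≤ N ^ 2 * A ^ 2 := by nlinarith
      have k1 : (1 + N ^ 2) * B ^ 2 ≤ (A ^ 2 + B ^ 2) * N ^ 2 := by nlinarith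
      have k2 : (A ^ 2 + B ^ 2) * ((1 + N ^ 2) * B ^ 2)
          ≤ (A ^ 2 + B ^ 2) * ((A ^ 2 + B ^ 2) * N ^ 2) :=
        mul_le_mul_of_nonneg_left k1 (by positivity)
      have k3 : (A ^ 2 + B ^ 2) ^ 2 ≤ (ρ * B) ^ 2 := by
        rw [← hs2]; exact pow_le_pow_left₀ (by positivity) hsB 2
      have k4 : (A ^ 2 + B ^ 2) ^ 2 * N ^ 2 ≤ (ρ * B) ^ 2 * N ^ 2 :=
        mul_le_mul_of_nonneg_right k3 (by positivity)
      nlinarith [k2, k4]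
    have h4 : (s * t) ^ 2 ≤ (N * ρ) ^ 2 := le_of_mul_le_mul_right hstep (by positivity)
    have h5 := Real.sqrt_le_sqrt h4
    rwa [Real.sqrt_sq (by positivity), Real.sqrt_sq (by positivity)] at h5


set_option maxHeartbeats 1000000 in
theorem stmt15 {n m : ℕ} (hm : 1 ≤ m) (hmn : m < n)
    (T : Submodule ℝ (EuclideanSpace ℝ (Fin n))) (hT : Module.finrank ℝ T = m)
    (P : EuclideanSpace ℝ (Fin m) →ₗᵢ[ℝ] EuclideanSpace ℝ (Fin n))
    (Q : EuclideanSpace ℝ (Fin (n - m)) →ₗᵢ[ℝ] EuclideanSpace ℝ (Fin n))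
    (hP : LinearMap.range P.toLinearMap = T)
    (hQ : LinearMap.range Q.toLinearMap = Tᗮ)
    (f : EuclideanSpace ℝ (Fin m) → EuclideanSpace ℝ (Fin (n - m)))
    (F : EuclideanSpace ℝ (Fin m) → EuclideanSpace ℝ (Fin n))
    (hF : F = fun x => P x + Q (f x))
    (Sig : Set (EuclideanSpace ℝ (Fin n))) (hSig : Sig ⊆ Set.range F)
    (a : EuclideanSpace ℝ (Fin n)) (ha : a ∈ Sig)
    (Tan : Submodule ℝ (EuclideanSpace ℝ (Fin n))) (hTan : Module.finrank ℝ Tan = m)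
    (hTanEq : (Tan : Set (EuclideanSpace ℝ (Fin n))) = tangentConeAt ℝ Sig a)
    (p : EuclideanSpace ℝ (Fin n) → EuclideanSpace ℝ (Fin m))
    (hp : p = fun b => LinearMap.adjoint P.toLinearMap b)
    (x : EuclideanSpace ℝ (Fin m)) (hx : x = p a)
    (hfd : DifferentiableAt ℝ f x) :
    ∀ b ∈ Sig,
      (1 - ‖fderiv ℝ f x‖ / Real.sqrt (1 + ‖fderiv ℝ f x‖ ^ 2)) *
          ‖f (p b) - f x - fderiv ℝ f x (p b - x)‖
        ≤ ‖(Submodule.orthogonalProjectionOnto Tanᗮ (b - a) : EuclideanSpace ℝ (Fin n))‖ ∧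
      ‖(Submodule.orthogonalProjectionOnto Tanᗮ (b - a) : EuclideanSpace ℝ (Fin n))‖
        ≤ ‖f (p b) - f x - fderiv ℝ f x (p b - x)‖ := by
  set pc := LinearMap.adjoint P.toLinearMap with hpc
  set qc := LinearMap.adjoint Q.toLinearMap with hqc
  set D := fderiv ℝ f x with hD
  -- basic inner product facts
  have hPQ : ∀ u w, ⟪P u, Q w⟫ = 0 := by
    intro u w
    exact Submodule.inner_right_of_mem_orthogonal
      (hP ▸ LinearMap.mem_range_self _ u) (hQ ▸ LinearMap.mem_range_self _ w)
  have hpcP : ∀ v, pc (P v) = v := by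
    intro v
    refine ext_inner_left ℝ fun u => ?_
    rw [hpc, LinearMap.adjoint_inner_right]
    exact P.inner_map_map u v
  have hpcQ : ∀ w, pc (Q w) = 0 := by
    intro w
    refine ext_inner_left ℝ fun u => ?_
    rw [hpc, LinearMap.adjoint_inner_right]
    simp [hPQ u w]
  have hqcQ : ∀ v, qc (Q v) = v := by
    intro v
    refine ext_inner_left ℝ fun u => ?_
    rw [hqc, LinearMap.adjoint_inner_right]
    exact Q.inner_map_map u v
  have hqcP : ∀ w, qc (P w) = 0 := by
    intro w
    refine ext_inner_left ℝ fun u => ?_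
    rw [hqc, LinearMap.adjoint_inner_right]
    rw [real_inner_comm]
    simp [hPQ w u]
  -- every element of Sig is a graph point
  have hmem : ∀ b ∈ Sig, b = P (pc b) + Q (f (pc b)) := by
    intro b hb
    obtain ⟨z, hz⟩ := hSig hb
    have hbz : b = P z + Q (f z) := by rw [← hz, hF]
    have hpcb : pc b = z := by
      rw [hbz, map_add, hpcP, hpcQ, add_zero]
    rw [hpcb, ← hbz]
  have hxa : x = pc a := by rw [hx, hp]
  have hax : a = P x + Q (f x) := by rw [hxa]; exact hmem a ha
  -- the graph of the derivative
  set L : EuclideanSpace ℝ (Fin m) →ₗ[ℝ] EuclideanSpace ℝ (Fin n) :=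
    P.toLinearMap + (Q.toLinearMap ∘ₗ (D : EuclideanSpace ℝ (Fin m) →ₗ[ℝ] EuclideanSpace ℝ (Fin (n - m)))) with hL
  have hLapp : ∀ v, L v = P v + Q (D v) := fun v => rfl
  set G : Submodule ℝ (EuclideanSpace ℝ (Fin n)) := LinearMap.range L with hG
  have hLinj : Function.Injective L := by
    intro v w hvw
    have : pc (L v) = pc (L w) := by rw [hvw]
    rwa [hLapp, hLapp, map_add, map_add, hpcP, hpcP, hpcQ, hpcQ, add_zero, add_zero] at this
  have hGrank : Module.finrank ℝ G = m := by
    rw [hG, LinearMap.finrank_range_of_inj hLinj, finrank_euclideanSpace_fin]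
  -- tangent cone is contained in the graph
  have hpcCont : Continuous pc := pc.continuous_of_finiteDimensional
  have hqcCont : Continuous qc := qc.continuous_of_finiteDimensional
  have hsub : tangentConeAt ℝ Sig a ⊆ (G : Set (EuclideanSpace ℝ (Fin n))) := by
    rintro v hv0
    obtain ⟨c, d, hd0', hd, hcd⟩ := mem_tangentConeAt_iff_exists_seq.mp hv0
    set y : ℕ → EuclideanSpace ℝ (Fin m) := fun k => pc (a + d k) with hy
    have hdk : ∀ᶠ k in atTop, d k = P (y k - x) + Q (f (y k) - f x) := by
      filter_upwards [hd] with k hk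
      have h1 : a + d k = P (y k) + Q (f (y k)) := hmem _ hk
      have : d k = (P (y k) + Q (f (y k))) - (P x + Q (f x)) := by
        rw [← h1, ← hax]; abel
      rw [this, map_sub, map_sub]; abel
    have hd0 : Tendsto d atTop (𝓝 0) := hd0'
    have hyx : Tendsto y atTop (𝓝 x) := by
      have h0 : Tendsto (fun k => pc (a + d k)) atTop (𝓝 (pc (a + 0))) :=
        (hpcCont.tendsto _).comp (tendsto_const_nhds.add hd0)
      rw [add_zero, ← hxa] at h0
      rw [hy]; exact h0
    have hcg : Tendsto (fun k => c k • (y k - x)) atTop (𝓝 (pc v)) := by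
      have h0 : Tendsto (fun k => pc (c k • d k)) atTop (𝓝 (pc v)) :=
        (hpcCont.tendsto _).comp hcd
      refine h0.congr' ?_
      filter_upwards [hdk] with k hk
      rw [_root_.map_smul, hk, map_add, hpcP, hpcQ, add_zero]
    have hcq : Tendsto (fun k => c k • (f (y k) - f x)) atTop (𝓝 (qc v)) := by
      have h0 : Tendsto (fun k => qc (c k • d k)) atTop (𝓝 (qc v)) :=
        (hqcCont.tendsto _).comp hcd
      refine h0.congr' ?_
      filter_upwards [hdk] with k hk
      rw [_root_.map_smul, hk, map_add, hqcP, hqcQ, zero_add]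
    have hlittle : (fun k => f (y k) - f x - D (y k - x)) =o[atTop] fun k => y k - x :=
      hfd.hasFDerivAt.isLittleO.comp_tendsto hyx
    have hR0 : Tendsto (fun k => c k • (f (y k) - f x - D (y k - x))) atTop (𝓝 0) := by
      have h1 : (fun k => c k • (f (y k) - f x - D (y k - x))) =o[atTop]
          fun k => c k • (y k - x) :=
        (isBigO_refl c atTop).smul_isLittleO hlittle
      have h2 : (fun k => c k • (y k - x)) =O[atTop] (fun _ => (1 : ℝ)) :=
        hcg.isBigO_one ℝ
      exact (isLittleO_one_iff ℝ).mp (h1.trans_isBigO h2)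
    have hcq2 : Tendsto (fun k => c k • (f (y k) - f x)) atTop (𝓝 (D (pc v))) := by
      have h1 : Tendsto (fun k => D (c k • (y k - x))) atTop (𝓝 (D (pc v))) :=
        (D.continuous.tendsto _).comp hcg
      have h2 : Tendsto (fun k => D (c k • (y k - x)) + c k • (f (y k) - f x - D (y k - x)))
          atTop (𝓝 (D (pc v) + 0)) := h1.add hR0
      rw [add_zero] at h2
      refine h2.congr fun k => ?_
      rw [D.map_smul, ← smul_add]
      congr 1
      abel
    have hqv : qc v = D (pc v) := tendsto_nhds_unique hcq hcq2
    have hdec : v = P (pc v) + Q (qc v) := by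
      have hortho : (↑(Submodule.orthogonalProjectionOnto T v) : EuclideanSpace ℝ (Fin n)) + ↑(Submodule.orthogonalProjectionOnto Tᗮ v) = v :=
        Submodule.starProjection_add_starProjection_orthogonal (K := T) v
      obtain ⟨u, hu⟩ : (↑(Submodule.orthogonalProjectionOnto T v) : EuclideanSpace ℝ (Fin n)) ∈
          LinearMap.range P.toLinearMap := by rw [hP]; exact (Submodule.orthogonalProjectionOnto T v).2
      obtain ⟨w, hw⟩ : (↑(Submodule.orthogonalProjectionOnto Tᗮ v) : EuclideanSpace ℝ (Fin n)) ∈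
          LinearMap.range Q.toLinearMap := by rw [hQ]; exact (Submodule.orthogonalProjectionOnto Tᗮ v).2
      have hv : v = P u + Q w := by rw [← hortho, ← hu, ← hw]; rfl
      have hpcv : pc v = u := by rw [hv, map_add, hpcP, hpcQ, add_zero]
      have hqcv : qc v = w := by rw [hv, map_add, hqcP, hqcQ, zero_add]
      rw [hpcv, hqcv, hv]
    exact ⟨pc v, by rw [hLapp, ← hqv, ← hdec]⟩
  have hTanG : Tan = G := by
    refine Submodule.eq_of_le_of_finrank_eq ?_ (by rw [hTan, hGrank])
    intro v hv
    exact hsub (hTanEq ▸ hv)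
  -- now the main estimates
  intro b hb
  set y := p b with hyb
  have hyb' : y = pc b := by rw [hyb, hp]
  set r := f y - f x - D (y - x) with hr
  have hbdec : b - a = L (y - x) + Q r := by
    have h1 : b = P y + Q (f y) := by rw [hyb']; exact hmem b hb
    rw [h1, hax, hLapp, hr]
    simp only [map_sub]
    abel
  have hLmem : L (y - x) ∈ Gᗮᗮ :=
    (Submodule.orthogonal_orthogonal G).symm ▸ LinearMap.mem_range_self _ _
  have hproj : (Submodule.orthogonalProjectionOnto Gᗮ (b - a) : EuclideanSpace ℝ (Fin n))
      = (Submodule.orthogonalProjectionOnto Gᗮ (Q r) : EuclideanSpace ℝ (Fin n)) := by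
    rw [hbdec, map_add, Submodule.orthogonalProjectionOnto_apply_of_mem_orthogonal hLmem]
    simp
  have hQr : ‖Q r‖ = ‖r‖ := Q.norm_map r
  -- upper bound
  have hupper : ‖(Submodule.orthogonalProjectionOnto Gᗮ (Q r) : EuclideanSpace ℝ (Fin n))‖ ≤ ‖r‖ := by
    calc ‖(Submodule.orthogonalProjectionOnto Gᗮ (Q r) : EuclideanSpace ℝ (Fin n))‖
        ≤ ‖Submodule.orthogonalProjectionOnto Gᗮ‖ * ‖Q r‖ := (Submodule.orthogonalProjectionOnto Gᗮ).le_opNorm _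
      _ ≤ 1 * ‖Q r‖ := by
          exact mul_le_mul_of_nonneg_right (Submodule.orthogonalProjectionOnto_norm_le _) (norm_nonneg _)
      _ = ‖r‖ := by rw [one_mul, hQr]
  -- norm of the projection of Q r onto G
  set g : EuclideanSpace ℝ (Fin n) := ↑(Submodule.orthogonalProjectionOnto G (Q r)) with hg
  obtain ⟨u, hu⟩ : g ∈ G := (Submodule.orthogonalProjectionOnto G (Q r)).2
  have hinner : ‖g‖ ^ 2 = ⟪r, D u⟫ := by
    have h1 : ⟪Q r - g, g⟫ = 0 :=
      Submodule.starProjection_inner_eq_zero (Q r) g (Submodule.orthogonalProjectionOnto G (Q r)).2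
    have h2 : ⟪Q r, g⟫ = ‖g‖ ^ 2 := by
      rw [inner_sub_left] at h1
      have := sub_eq_zero.mp h1
      rw [this, real_inner_self_eq_norm_sq]
    have hPQ' : ⟪Q r, P u⟫ = 0 := by rw [real_inner_comm]; exact hPQ u r
    have h3 : ⟪Q r, g⟫ = ⟪r, D u⟫ := by
      rw [← hu, hLapp, inner_add_right, hPQ', zero_add, Q.inner_map_map]
    rw [← h2, h3]
  have hnormsq : ‖g‖ ^ 2 = ‖u‖ ^ 2 + ‖D u‖ ^ 2 := by
    rw [← hu, hLapp, norm_add_sq_real, hPQ, P.norm_map, Q.norm_map, mul_zero, add_zero]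
  -- arithmetic
  set N := ‖D‖ with hN
  have hN0 : 0 ≤ N := norm_nonneg _
  set t := Real.sqrt (1 + N ^ 2) with ht
  have ht2 : t ^ 2 = 1 + N ^ 2 := Real.sq_sqrt (by positivity)
  have ht0 : 0 < t := Real.sqrt_pos.mpr (by positivity)
  have hr0 : 0 ≤ ‖r‖ := norm_nonneg _
  have hs0 : 0 ≤ ‖g‖ := norm_nonneg _
  have hA0 : 0 ≤ ‖u‖ := norm_nonneg _
  have hB0 : 0 ≤ ‖D u‖ := norm_nonneg _
  have hBN : ‖D u‖ ≤ N * ‖u‖ := D.le_opNorm u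
  clear_value N t g
  have hsB : ‖g‖ ^ 2 ≤ ‖r‖ * ‖D u‖ := by
    rw [hinner]; exact real_inner_le_norm r (D u)
  have hgle : ‖g‖ ≤ N * ‖r‖ / t :=
    stmt15_arith ‖g‖ t ‖u‖ ‖D u‖ N ‖r‖ hs0 hA0 hB0 hN0 hr0 ht0 ht2 hnormsq hsB hBN
  -- put everything together
  rw [hTanG]
  constructor
  · rw [hproj]
    have horth := Submodule.starProjection_add_starProjection_orthogonal (K := G) (Q r)
    have hval : (Submodule.orthogonalProjectionOnto Gᗮ (Q r) : EuclideanSpace ℝ (Fin n)) = Q r - g := by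
      rw [hg]; exact eq_sub_of_add_eq' horth
    rw [hval]
    have h6 : ‖Q r‖ - ‖g‖ ≤ ‖Q r - g‖ := norm_sub_norm_le _ _
    rw [hQr] at h6
    have h7 : (1 - N / t) * ‖r‖ = ‖r‖ - (N * ‖r‖ / t) := by ring
    rw [h7]
    linarith [hgle, h6]
  · rw [hproj]; exact hupper
end
end
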